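/- arXiv:2504.09741 — 5 statements merged into one kernel-verified Lean document; each statement's English description precedes it below -/
import Mathlib

section
/- For every smooth compactly supported function f : ℝ^k → ℝ one has the identity ∫_{ℝ^k} (|y|²/2 − k) f(y)² e^{−|y|²/4} dy = ∫_{ℝ^k} ∇(f²)(y) · y e^{−|y|²/4} dy, and consequently ∫_{ℝ^k} (|y|²/4) f(y)² e^{−|y|²/4} dy ≤ k ∫_{ℝ^k} f(y)² e^{−|y|²/4} dy + 4 ∫_{ℝ^k} |∇f(y)|² e^{−|y|²/4} dy. -/
open MeasureTheory Real
open scoped RealInnerProductSpace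

section aux

variable {k : ℕ}

private lemma hasFDerivAt_W' (y : EuclideanSpace ℝ (Fin k)) :
    HasFDerivAt (fun y : EuclideanSpace ℝ (Fin k) => Real.exp (-‖y‖ ^ 2 / 4))
      (((-1/2 : ℝ) * Real.exp (-‖y‖ ^ 2 / 4)) • innerSL ℝ y) y := by
  have e : (fun y : EuclideanSpace ℝ (Fin k) => Real.exp (-‖y‖ ^ 2 / 4))
      = fun y => Real.exp ((-1/4 : ℝ) * ‖y‖ ^ 2) := by
    funext z; ring_nf
  rw [e]
  have h := (((hasFDerivAt_id y).norm_sq).const_mul (-1/4 : ℝ)).exp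
  refine h.congr_fderiv ?_
  ext v
  simp
  rw [show ((-1:ℝ)/4 * ‖y‖^2) = -‖y‖^2/4 by ring]
  ring

private lemma sum_sq_eq' (y : EuclideanSpace ℝ (Fin k)) : ∑ i, y i ^ 2 = ‖y‖ ^ 2 := by
  rw [EuclideanSpace.norm_eq, Real.sq_sqrt (Finset.sum_nonneg fun i _ => by positivity)]
  simp

private lemma y_eq_sum' (y : EuclideanSpace ℝ (Fin k)) :
    y = ∑ i, (y i) • EuclideanSpace.single i (1:ℝ) := by
  have := ((EuclideanSpace.basisFun (Fin k) ℝ).sum_repr y).symm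
  simpa [EuclideanSpace.basisFun_apply, EuclideanSpace.basisFun_repr] using this

private lemma ibp_coord' (g : EuclideanSpace ℝ (Fin k) → ℝ)
    (hg : ContDiff ℝ (⊤ : ℕ∞) g) (hgs : HasCompactSupport g) (i : Fin k) :
    ∫ y : EuclideanSpace ℝ (Fin k),
        fderiv ℝ g y (EuclideanSpace.single i (1:ℝ)) * (y i * Real.exp (-‖y‖ ^ 2 / 4))
      = ∫ y : EuclideanSpace ℝ (Fin k),
          (y i ^ 2 / 2 - 1) * (g y * Real.exp (-‖y‖ ^ 2 / 4)) := by
  set W : EuclideanSpace ℝ (Fin k) → ℝ := fun y => Real.exp (-‖y‖ ^ 2 / 4) with hW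
  set V : EuclideanSpace ℝ (Fin k) → ℝ := fun y => y i * W y with hV
  have Wc : Continuous W := by fun_prop
  have hVd : ∀ x, HasFDerivAt V
      ((x i) • (((-1/2 : ℝ) * W x) • innerSL ℝ x)
        + W x • (EuclideanSpace.proj i : EuclideanSpace ℝ (Fin k) →L[ℝ] ℝ)) x := by
    intro x
    exact ((EuclideanSpace.proj i).hasFDerivAt).mul (hasFDerivAt_W' x)
  have hfderivV : ∀ x : EuclideanSpace ℝ (Fin k),
      fderiv ℝ V x (EuclideanSpace.single i (1:ℝ)) = (1 - x i ^ 2 / 2) * W x := by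
    intro x
    rw [(hVd x).fderiv]
    simp [EuclideanSpace.inner_single_right, EuclideanSpace.single_apply]
    ring
  have hVdiff : Differentiable ℝ V := fun x => (hVd x).differentiableAt
  have hfc : Continuous fun x => fderiv ℝ g x (EuclideanSpace.single i (1:ℝ)) :=
    (hg.continuous_fderiv (by simp)).clm_apply continuous_const
  have hfs : HasCompactSupport fun x => fderiv ℝ g x (EuclideanSpace.single i (1:ℝ)) :=
    (hgs.fderiv (𝕜 := ℝ)).comp_left (g := fun L : EuclideanSpace ℝ (Fin k) →L[ℝ] ℝ =>
      L (EuclideanSpace.single i (1:ℝ))) rfl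
  have I1 : Integrable fun x : EuclideanSpace ℝ (Fin k) =>
      fderiv ℝ g x (EuclideanSpace.single i (1:ℝ)) * V x :=
    (hfc.mul (by fun_prop)).integrable_of_hasCompactSupport hfs.mul_right
  have I2 : Integrable fun x : EuclideanSpace ℝ (Fin k) =>
      g x * fderiv ℝ V x (EuclideanSpace.single i (1:ℝ)) := by
    simp only [hfderivV]
    exact (hg.continuous.mul (by fun_prop)).integrable_of_hasCompactSupport hgs.mul_right
  have I3 : Integrable fun x : EuclideanSpace ℝ (Fin k) => g x * V x :=
    (hg.continuous.mul (by fun_prop)).integrable_of_hasCompactSupport hgs.mul_right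
  have h := integral_mul_fderiv_eq_neg_fderiv_mul_of_integrable I1 I2 I3
    (fun x _ => hg.differentiable (by simp) x) (fun x _ => hVdiff x)
  have h2 : (∫ x, fderiv ℝ g x (EuclideanSpace.single i (1:ℝ)) * V x)
      = ∫ x, (x i ^ 2 / 2 - 1) * (g x * W x) := by
    rw [show (∫ x, fderiv ℝ g x (EuclideanSpace.single i (1:ℝ)) * V x)
        = - ∫ x, g x * fderiv ℝ V x (EuclideanSpace.single i (1:ℝ)) from by rw [h, neg_neg],
      ← integral_neg]
    congr 1
    funext x
    rw [hfderivV]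
    simp only [hV]
    ring
  exact h2

private lemma main_identity' (g : EuclideanSpace ℝ (Fin k) → ℝ)
    (hg : ContDiff ℝ (⊤ : ℕ∞) g) (hgs : HasCompactSupport g) :
    ∫ y : EuclideanSpace ℝ (Fin k),
        (‖y‖ ^ 2 / 2 - (k : ℝ)) * g y * Real.exp (-‖y‖ ^ 2 / 4)
      = ∫ y : EuclideanSpace ℝ (Fin k), fderiv ℝ g y y * Real.exp (-‖y‖ ^ 2 / 4) := by
  set W : EuclideanSpace ℝ (Fin k) → ℝ := fun y => Real.exp (-‖y‖ ^ 2 / 4) with hW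
  have Wc : Continuous W := by fun_prop
  have hfc : ∀ i : Fin k, Continuous fun x => fderiv ℝ g x (EuclideanSpace.single i (1:ℝ)) :=
    fun i => (hg.continuous_fderiv (by simp)).clm_apply continuous_const
  have hfs : ∀ i : Fin k,
      HasCompactSupport fun x => fderiv ℝ g x (EuclideanSpace.single i (1:ℝ)) :=
    fun i => (hgs.fderiv (𝕜 := ℝ)).comp_left (g := fun L : EuclideanSpace ℝ (Fin k) →L[ℝ] ℝ =>
      L (EuclideanSpace.single i (1:ℝ))) rfl
  have ILa : ∀ i : Fin k, Integrable fun y : EuclideanSpace ℝ (Fin k) =>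
      fderiv ℝ g y (EuclideanSpace.single i (1:ℝ)) * (y i * W y) :=
    fun i => ((hfc i).mul (by fun_prop)).integrable_of_hasCompactSupport (hfs i).mul_right
  have IRb : ∀ i : Fin k, Integrable fun y : EuclideanSpace ℝ (Fin k) =>
      (y i ^ 2 / 2 - 1) * (g y * W y) := by
    intro i
    refine ((Continuous.mul (by fun_prop) (hg.continuous.mul Wc)).integrable_of_hasCompactSupport ?_)
    exact (hgs.mul_right).mul_left
  have hdecomp : ∀ y : EuclideanSpace ℝ (Fin k),
      fderiv ℝ g y y = ∑ i, fderiv ℝ g y (EuclideanSpace.single i (1:ℝ)) * (y i) := by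
    intro y
    have h0 : fderiv ℝ g y y = fderiv ℝ g y (∑ i, (y i) • EuclideanSpace.single i (1:ℝ)) := by
      rw [← y_eq_sum']
    rw [h0, map_sum]
    refine Finset.sum_congr rfl fun i _ => ?_
    rw [(fderiv ℝ g y).map_smul]
    simp [smul_eq_mul]
    ring
  calc
    ∫ y : EuclideanSpace ℝ (Fin k), (‖y‖ ^ 2 / 2 - (k : ℝ)) * g y * W y
        = ∫ y : EuclideanSpace ℝ (Fin k), ∑ i, (y i ^ 2 / 2 - 1) * (g y * W y) := by
          congr 1
          funext y
          rw [← Finset.sum_mul, Finset.sum_sub_distrib, ← Finset.sum_div, sum_sq_eq']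
          simp [Finset.card_univ]
          ring
    _ = ∑ i, ∫ y : EuclideanSpace ℝ (Fin k), (y i ^ 2 / 2 - 1) * (g y * W y) :=
          integral_finset_sum _ (fun i _ => IRb i)
    _ = ∑ i, ∫ y : EuclideanSpace ℝ (Fin k),
          fderiv ℝ g y (EuclideanSpace.single i (1:ℝ)) * (y i * W y) := by
          refine Finset.sum_congr rfl fun i _ => ?_
          exact (ibp_coord' g hg hgs i).symm
    _ = ∫ y : EuclideanSpace ℝ (Fin k), ∑ i,
          fderiv ℝ g y (EuclideanSpace.single i (1:ℝ)) * (y i * W y) :=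
          (integral_finset_sum _ (fun i _ => ILa i)).symm
    _ = ∫ y : EuclideanSpace ℝ (Fin k), fderiv ℝ g y y * W y := by
          congr 1
          funext y
          rw [hdecomp y, Finset.sum_mul]
          refine Finset.sum_congr rfl fun i _ => ?_
          ring

end aux

/-- Weighted Poincaré-type identity and inequality with Gaussian weight `e^{-|y|²/4}`. -/
theorem stmt_0 (k : ℕ) (f : EuclideanSpace ℝ (Fin k) → ℝ)
    (hf : ContDiff ℝ (⊤ : ℕ∞) f) (hsupp : HasCompactSupport f) :
    (∫ y : EuclideanSpace ℝ (Fin k),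
        (‖y‖ ^ 2 / 2 - (k : ℝ)) * (f y) ^ 2 * Real.exp (-‖y‖ ^ 2 / 4))
      = (∫ y : EuclideanSpace ℝ (Fin k),
          (inner ℝ (gradient (fun z => (f z) ^ 2) y) y : ℝ) * Real.exp (-‖y‖ ^ 2 / 4)) ∧
    (∫ y : EuclideanSpace ℝ (Fin k),
        (‖y‖ ^ 2 / 4) * (f y) ^ 2 * Real.exp (-‖y‖ ^ 2 / 4))
      ≤ (k : ℝ) * (∫ y : EuclideanSpace ℝ (Fin k), (f y) ^ 2 * Real.exp (-‖y‖ ^ 2 / 4))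
        + 4 * (∫ y : EuclideanSpace ℝ (Fin k),
            ‖gradient f y‖ ^ 2 * Real.exp (-‖y‖ ^ 2 / 4)) := by
  have hfdiff : Differentiable ℝ f := hf.differentiable (by simp)
  have hgc : ContDiff ℝ (⊤ : ℕ∞) (fun z => (f z) ^ 2) := hf.pow 2
  have hgs : HasCompactSupport (fun z => (f z) ^ 2) :=
    hsupp.comp_left (g := fun t : ℝ => t ^ 2) (by simp)
  have Wc : Continuous (fun y : EuclideanSpace ℝ (Fin k) => Real.exp (-‖y‖ ^ 2 / 4)) := by
    fun_prop
  have hWpos : ∀ y : EuclideanSpace ℝ (Fin k), 0 < Real.exp (-‖y‖ ^ 2 / 4) :=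
    fun y => Real.exp_pos _
  -- gradient rewrites
  have hgradg : ∀ y : EuclideanSpace ℝ (Fin k),
      (inner ℝ (gradient (fun z => (f z) ^ 2) y) y : ℝ) = fderiv ℝ (fun z => (f z) ^ 2) y y := by
    intro y
    simp [gradient, InnerProductSpace.toDual_symm_apply]
  have hgradf : ∀ y : EuclideanSpace ℝ (Fin k), ‖gradient f y‖ = ‖fderiv ℝ f y‖ := by
    intro y
    simp [gradient]
  -- identity
  have ident : (∫ y : EuclideanSpace ℝ (Fin k),
        (‖y‖ ^ 2 / 2 - (k : ℝ)) * (f y) ^ 2 * Real.exp (-‖y‖ ^ 2 / 4))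
      = ∫ y : EuclideanSpace ℝ (Fin k),
          fderiv ℝ (fun z => (f z) ^ 2) y y * Real.exp (-‖y‖ ^ 2 / 4) :=
    main_identity' (fun z => (f z) ^ 2) hgc hgs
  have ident' : (∫ y : EuclideanSpace ℝ (Fin k),
        (‖y‖ ^ 2 / 2 - (k : ℝ)) * (f y) ^ 2 * Real.exp (-‖y‖ ^ 2 / 4))
      = ∫ y : EuclideanSpace ℝ (Fin k),
          (inner ℝ (gradient (fun z => (f z) ^ 2) y) y : ℝ) * Real.exp (-‖y‖ ^ 2 / 4) := by
    rw [ident]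
    congr 1
    funext y
    rw [hgradg]
  refine ⟨ident', ?_⟩
  -- derivative of f^2
  have hgder : ∀ x, fderiv ℝ (fun z => (f z) ^ 2) x = (2 * f x) • fderiv ℝ f x := by
    intro x
    have e : (fun z => (f z) ^ 2) = fun z => f z * f z := funext fun z => pow_two (f z)
    rw [e, HasFDerivAt.fderiv (f := fun z => f z * f z)
      (((hfdiff x).hasFDerivAt).mul ((hfdiff x).hasFDerivAt))]
    ext v
    simp [smul_eq_mul]
    ring
  -- integrability
  have hIA : Integrable fun y : EuclideanSpace ℝ (Fin k) =>
      ‖y‖ ^ 2 / 4 * (f y) ^ 2 * Real.exp (-‖y‖ ^ 2 / 4) := by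
    refine (Continuous.integrable_of_hasCompactSupport (by fun_prop) ?_)
    apply HasCompactSupport.mono hgs
    intro y hy
    simp only [Function.mem_support] at hy ⊢
    intro h
    exact hy (by simp [h])
  have hIB : Integrable fun y : EuclideanSpace ℝ (Fin k) =>
      (f y) ^ 2 * Real.exp (-‖y‖ ^ 2 / 4) := by
    refine (Continuous.integrable_of_hasCompactSupport (by fun_prop) ?_)
    exact hgs.mul_right
  have hIC : Integrable fun y : EuclideanSpace ℝ (Fin k) =>
      ‖fderiv ℝ f y‖ ^ 2 * Real.exp (-‖y‖ ^ 2 / 4) := by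
    refine (Continuous.integrable_of_hasCompactSupport ?_ ?_)
    · exact (((hf.continuous_fderiv (by simp)).norm.pow 2).mul Wc)
    · apply HasCompactSupport.mono (hsupp.fderiv (𝕜 := ℝ))
      intro y hy
      simp only [Function.mem_support] at hy ⊢
      intro h
      exact hy (by simp [h])
  have hIL : Integrable fun y : EuclideanSpace ℝ (Fin k) =>
      fderiv ℝ (fun z => (f z) ^ 2) y y * Real.exp (-‖y‖ ^ 2 / 4) := by
    refine (Continuous.integrable_of_hasCompactSupport ?_ ?_)
    · exact ((hgc.continuous_fderiv (by simp)).clm_apply continuous_id).mul Wc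
    · apply HasCompactSupport.mono (hgs.fderiv (𝕜 := ℝ))
      intro y hy
      simp only [Function.mem_support] at hy ⊢
      intro h
      exact hy (by simp [h])
  -- pointwise bound
  have pb : ∀ y : EuclideanSpace ℝ (Fin k),
      fderiv ℝ (fun z => (f z) ^ 2) y y * Real.exp (-‖y‖ ^ 2 / 4)
        ≤ ‖y‖ ^ 2 / 4 * (f y) ^ 2 * Real.exp (-‖y‖ ^ 2 / 4)
          + 4 * (‖fderiv ℝ f y‖ ^ 2 * Real.exp (-‖y‖ ^ 2 / 4)) := by
    intro y
    rw [hgder]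
    have hb : |fderiv ℝ f y y| ≤ ‖fderiv ℝ f y‖ * ‖y‖ := by
      rw [← Real.norm_eq_abs]
      exact (fderiv ℝ f y).le_opNorm y
    have hcore : 2 * f y * (fderiv ℝ f y y) ≤ ‖y‖ ^ 2 / 4 * (f y) ^ 2 + 4 * ‖fderiv ℝ f y‖ ^ 2 := by
      have h1 : 2 * f y * fderiv ℝ f y y ≤ 2 * |f y| * (‖fderiv ℝ f y‖ * ‖y‖) := by
        have := abs_mul (2 * f y) (fderiv ℝ f y y)
        have h2 : 2 * f y * fderiv ℝ f y y ≤ |2 * f y * fderiv ℝ f y y| := le_abs_self _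
        rw [this] at h2
        refine h2.trans ?_
        rw [abs_mul, abs_two]
        exact mul_le_mul_of_nonneg_left hb (by positivity)
      refine h1.trans ?_
      nlinarith [sq_nonneg (|f y| * ‖y‖ / 2 - 2 * ‖fderiv ℝ f y‖), sq_abs (f y),
        abs_nonneg (f y), norm_nonneg y, norm_nonneg (fderiv ℝ f y)]
    have hw := (hWpos y).le
    calc ((2 * f y) • fderiv ℝ f y) y * Real.exp (-‖y‖ ^ 2 / 4)
        = (2 * f y * fderiv ℝ f y y) * Real.exp (-‖y‖ ^ 2 / 4) := by
          simp [smul_eq_mul]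
          try ring
      _ ≤ (‖y‖ ^ 2 / 4 * (f y) ^ 2 + 4 * ‖fderiv ℝ f y‖ ^ 2) * Real.exp (-‖y‖ ^ 2 / 4) :=
          mul_le_mul_of_nonneg_right hcore hw
      _ = ‖y‖ ^ 2 / 4 * (f y) ^ 2 * Real.exp (-‖y‖ ^ 2 / 4)
          + 4 * (‖fderiv ℝ f y‖ ^ 2 * Real.exp (-‖y‖ ^ 2 / 4)) := by ring
  -- integral inequality
  have step : (∫ y : EuclideanSpace ℝ (Fin k),
        fderiv ℝ (fun z => (f z) ^ 2) y y * Real.exp (-‖y‖ ^ 2 / 4))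
      ≤ (∫ y : EuclideanSpace ℝ (Fin k),
          ‖y‖ ^ 2 / 4 * (f y) ^ 2 * Real.exp (-‖y‖ ^ 2 / 4))
        + 4 * ∫ y : EuclideanSpace ℝ (Fin k),
            ‖fderiv ℝ f y‖ ^ 2 * Real.exp (-‖y‖ ^ 2 / 4) := by
    rw [← integral_const_mul, ← integral_add hIA (hIC.const_mul 4)]
    exact integral_mono hIL (hIA.add (hIC.const_mul 4)) pb
  -- split the left integral
  have split : (∫ y : EuclideanSpace ℝ (Fin k),
        (‖y‖ ^ 2 / 2 - (k : ℝ)) * (f y) ^ 2 * Real.exp (-‖y‖ ^ 2 / 4))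
      = 2 * (∫ y : EuclideanSpace ℝ (Fin k),
          ‖y‖ ^ 2 / 4 * (f y) ^ 2 * Real.exp (-‖y‖ ^ 2 / 4))
        - (k : ℝ) * ∫ y : EuclideanSpace ℝ (Fin k), (f y) ^ 2 * Real.exp (-‖y‖ ^ 2 / 4) := by
    rw [← integral_const_mul, ← integral_const_mul, ← integral_sub (hIA.const_mul 2)
      (hIB.const_mul (k : ℝ))]
    congr 1
    funext y
    ring
  have final := ident.trans_le step
  rw [split] at final
  have hCeq : (∫ y : EuclideanSpace ℝ (Fin k),
        ‖gradient f y‖ ^ 2 * Real.exp (-‖y‖ ^ 2 / 4))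
      = ∫ y : EuclideanSpace ℝ (Fin k), ‖fderiv ℝ f y‖ ^ 2 * Real.exp (-‖y‖ ^ 2 / 4) := by
    congr 1
    funext y
    rw [hgradf]
  rw [hCeq]
  linarith
end

section
/- Let k ≥ 3 and ψ_{ii}(y) = y_i² − 2, ψ_{ij}(y) = 2y_i y_j (i≠j) on ℝ^k with Gaussian inner product ⟨f,g⟩ = ∫_{ℝ^k} f g e^{−|y|²/4} dy. Then for pairwise distinct indices i, j, ℓ, m one has ⟨ψ_{ii}·ψ_{ii}, ψ_{ii}⟩ = 8‖ψ_{ii}‖², ⟨ψ_{ij}·ψ_{ij}, ψ_{ii}⟩ = 8‖ψ_{ii}‖², and ⟨ψ_{im}·ψ_{iℓ}, ψ_{ℓm}⟩ = 8‖ψ_{ii}‖². -/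
open MeasureTheory Real

section Aux

private lemma integ_aux (n : ℕ) :
    Integrable (fun t : ℝ => t ^ n * Real.exp (-t ^ 2 / 4)) := by
  have h := integrable_rpow_mul_exp_neg_mul_sq (b := (1/4 : ℝ)) (by norm_num)
    (s := (n : ℝ)) (lt_of_lt_of_le neg_one_lt_zero (Nat.cast_nonneg n))
  have he : (fun t : ℝ => t ^ n * Real.exp (-t ^ 2 / 4))
      = fun t : ℝ => t ^ (n : ℝ) * Real.exp (-(1/4) * t ^ 2) := by
    funext t
    rw [Real.rpow_natCast]
    ring_nf
  rw [he]
  exact h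

private lemma mom_aux (n : ℕ) :
    ∫ t : ℝ, t ^ (2 * n) * Real.exp (-t ^ 2 / 4)
      = 2 ^ (2 * n + 1) * Real.Gamma ((n : ℝ) + 1 / 2) := by
  have habs := integral_comp_abs (f := fun s : ℝ => (s ^ 2) ^ n * Real.exp (-s ^ 2 / 4))
  simp only [sq_abs] at habs
  have h2 : (∫ x in Set.Ioi (0:ℝ), (x ^ 2) ^ n * Real.exp (-x ^ 2 / 4))
      = ∫ x in Set.Ioi (0:ℝ), x ^ ((2 * n : ℕ) : ℝ) * Real.exp (-(1/4) * x ^ (2 : ℝ)) := by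
    refine setIntegral_congr_fun measurableSet_Ioi (fun x _ => ?_)
    rw [Real.rpow_natCast, Real.rpow_two, pow_mul]
    ring_nf
  have h3 := integral_rpow_mul_exp_neg_mul_rpow (p := (2:ℝ)) (q := ((2 * n : ℕ) : ℝ))
    (b := (1/4 : ℝ)) two_pos (lt_of_lt_of_le neg_one_lt_zero (Nat.cast_nonneg _)) (by norm_num)
  have hpow : (1/4 : ℝ) ^ (-(((2 * n : ℕ) : ℝ) + 1) / 2) = 2 ^ (2 * n + 1) := by
    have h14 : (1/4 : ℝ) = (2 : ℝ) ^ (-2 : ℝ) := by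
      rw [Real.rpow_neg (by norm_num : (0:ℝ) ≤ 2), Real.rpow_two]
      norm_num
    rw [h14, ← Real.rpow_natCast (2:ℝ) (2 * n + 1), ← Real.rpow_mul (by norm_num : (0:ℝ) ≤ 2)]
    congr 1
    push_cast
    ring
  have hGamma : ((((2 * n : ℕ) : ℝ)) + 1) / 2 = (n : ℝ) + 1 / 2 := by push_cast; ring
  calc ∫ t : ℝ, t ^ (2 * n) * Real.exp (-t ^ 2 / 4)
      = ∫ t : ℝ, (t ^ 2) ^ n * Real.exp (-t ^ 2 / 4) := by simp_rw [← pow_mul]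
    _ = 2 * ∫ x in Set.Ioi (0:ℝ), (x ^ 2) ^ n * Real.exp (-x ^ 2 / 4) := habs
    _ = 2 * ((1/4 : ℝ) ^ (-(((2 * n : ℕ) : ℝ) + 1) / 2) * (1 / 2)
          * Real.Gamma ((((2 * n : ℕ) : ℝ) + 1) / 2)) := by rw [h2, h3]
    _ = 2 ^ (2 * n + 1) * Real.Gamma ((n : ℝ) + 1 / 2) := by
        rw [hpow, hGamma]; ring

private lemma gamma32 : Real.Gamma (3/2 : ℝ) = Real.sqrt π / 2 := by
  rw [show (3/2 : ℝ) = 1/2 + 1 by norm_num,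
    Real.Gamma_add_one (by norm_num : (1/2 : ℝ) ≠ 0), Real.Gamma_one_half_eq]
  ring

private lemma gamma52 : Real.Gamma (5/2 : ℝ) = 3 / 4 * Real.sqrt π := by
  rw [show (5/2 : ℝ) = 3/2 + 1 by norm_num,
    Real.Gamma_add_one (by norm_num : (3/2 : ℝ) ≠ 0), gamma32]
  ring

private lemma gamma72 : Real.Gamma (7/2 : ℝ) = 15 / 8 * Real.sqrt π := by
  rw [show (7/2 : ℝ) = 5/2 + 1 by norm_num,
    Real.Gamma_add_one (by norm_num : (5/2 : ℝ) ≠ 0), gamma52]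
  ring

private lemma mom0_aux : ∫ t : ℝ, t ^ 0 * Real.exp (-t ^ 2 / 4) = 2 * Real.sqrt π := by
  have := mom_aux 0
  norm_num [Real.Gamma_one_half_eq] at this
  simpa using this

private lemma mom2_aux : ∫ t : ℝ, t ^ 2 * Real.exp (-t ^ 2 / 4) = 4 * Real.sqrt π := by
  have := mom_aux 1
  norm_num [show ((1:ℕ):ℝ) + 1/2 = 3/2 by norm_num, gamma32] at this
  linarith [this]

private lemma mom4_aux : ∫ t : ℝ, t ^ 4 * Real.exp (-t ^ 2 / 4) = 24 * Real.sqrt π := by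
  have := mom_aux 2
  norm_num [show ((2:ℕ):ℝ) + 1/2 = 5/2 by norm_num, gamma52] at this
  linarith [this]

private lemma mom6_aux : ∫ t : ℝ, t ^ 6 * Real.exp (-t ^ 2 / 4) = 240 * Real.sqrt π := by
  have := mom_aux 3
  norm_num [show ((3:ℕ):ℝ) + 1/2 = 7/2 by norm_num, gamma72] at this
  linarith [this]

private lemma int_poly_aux (c0 c2 c4 c6 : ℝ) :
    ∫ t : ℝ, (c6 * t ^ 6 + c4 * t ^ 4 + c2 * t ^ 2 + c0) * Real.exp (-t ^ 2 / 4)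
      = (240 * c6 + 24 * c4 + 4 * c2 + 2 * c0) * Real.sqrt π := by
  have hrw : ∀ t : ℝ, (c6 * t ^ 6 + c4 * t ^ 4 + c2 * t ^ 2 + c0) * Real.exp (-t ^ 2 / 4)
      = c6 * (t ^ 6 * Real.exp (-t ^ 2 / 4)) + c4 * (t ^ 4 * Real.exp (-t ^ 2 / 4))
        + c2 * (t ^ 2 * Real.exp (-t ^ 2 / 4)) + c0 * (t ^ 0 * Real.exp (-t ^ 2 / 4)) := by
    intro t; ring
  simp_rw [hrw]
  have i6 : Integrable (fun t : ℝ => c6 * (t ^ 6 * Real.exp (-t ^ 2 / 4))) :=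
    (integ_aux 6).const_mul c6
  have i4 : Integrable (fun t : ℝ => c4 * (t ^ 4 * Real.exp (-t ^ 2 / 4))) :=
    (integ_aux 4).const_mul c4
  have i2 : Integrable (fun t : ℝ => c2 * (t ^ 2 * Real.exp (-t ^ 2 / 4))) :=
    (integ_aux 2).const_mul c2
  have i0 : Integrable (fun t : ℝ => c0 * (t ^ 0 * Real.exp (-t ^ 2 / 4))) :=
    (integ_aux 0).const_mul c0
  have i64 : Integrable (fun t : ℝ => c6 * (t ^ 6 * Real.exp (-t ^ 2 / 4))
      + c4 * (t ^ 4 * Real.exp (-t ^ 2 / 4))) := by exact i6.add i4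
  have i642 : Integrable (fun t : ℝ => c6 * (t ^ 6 * Real.exp (-t ^ 2 / 4))
      + c4 * (t ^ 4 * Real.exp (-t ^ 2 / 4)) + c2 * (t ^ 2 * Real.exp (-t ^ 2 / 4))) := by
    exact i64.add i2
  rw [integral_add i642 i0, integral_add i64 i2, integral_add i6 i4,
    integral_const_mul, integral_const_mul, integral_const_mul, integral_const_mul,
    mom0_aux, mom2_aux, mom4_aux, mom6_aux]
  ring

private lemma gauss_prod_aux {k : ℕ} (f : Fin k → ℝ → ℝ) :
    (∫ y : EuclideanSpace ℝ (Fin k), (∏ a, f a (y a)) * Real.exp (-‖y‖ ^ 2 / 4))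
      = ∏ a, ∫ t : ℝ, f a t * Real.exp (-t ^ 2 / 4) := by
  rw [← ((EuclideanSpace.volume_preserving_symm_measurableEquiv_toLp (Fin k)).symm).integral_comp'
    (fun y => (∏ a, f a (y a)) * Real.exp (-‖y‖ ^ 2 / 4))]
  have hval : ∀ (x : Fin k → ℝ) (a : Fin k),
      ((MeasurableEquiv.toLp 2 (Fin k → ℝ)).symm.symm x) a = x a := by
    intro x a
    rfl
  have hnorm : ∀ x : Fin k → ℝ,
      ‖(MeasurableEquiv.toLp 2 (Fin k → ℝ)).symm.symm x‖ ^ 2 = ∑ a, (x a) ^ 2 := by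
    intro x
    rw [EuclideanSpace.norm_eq, Real.sq_sqrt (by positivity)]
    simp only [hval, Real.norm_eq_abs, sq_abs]
  have hexp : ∀ x : Fin k → ℝ,
      Real.exp (-(∑ a, (x a) ^ 2) / 4) = ∏ a, Real.exp (-(x a) ^ 2 / 4) := by
    intro x
    rw [← Real.exp_sum]
    congr 1
    rw [← Finset.sum_div, Finset.sum_neg_distrib]
  have hintegrand : ∀ x : Fin k → ℝ,
      (∏ a, f a (((MeasurableEquiv.toLp 2 (Fin k → ℝ)).symm.symm x) a))
          * Real.exp (-‖(MeasurableEquiv.toLp 2 (Fin k → ℝ)).symm.symm x‖ ^ 2 / 4)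
        = ∏ a, (f a (x a) * Real.exp (-(x a) ^ 2 / 4)) := by
    intro x
    rw [hnorm, hexp, Finset.prod_mul_distrib]
    congr 1
  simp_rw [hintegrand]
  exact MeasureTheory.integral_fintype_prod_eq_prod
    (f := fun a t => f a t * Real.exp (-t ^ 2 / 4))


private lemma prod_ite_one_fn {k : ℕ} (i : Fin k) (v : Fin k → ℝ) (e : ℝ) :
    (∏ a : Fin k, (if a = i then v a else e)) = v i * e ^ (k - 1) := by
  rw [← Finset.mul_prod_erase Finset.univ _ (Finset.mem_univ i), if_pos rfl]
  congr 1
  rw [Finset.prod_congr rfl (fun a ha => if_neg (Finset.ne_of_mem_erase ha)),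
    Finset.prod_const, Finset.card_erase_of_mem (Finset.mem_univ i), Finset.card_univ,
    Fintype.card_fin]

private lemma prod_ite_two_fn {k : ℕ} {i j : Fin k} (hji : j ≠ i) (v w : Fin k → ℝ) (e : ℝ) :
    (∏ a : Fin k, (if a = i then v a else if a = j then w a else e))
      = v i * w j * e ^ (k - 2) := by
  rw [← Finset.mul_prod_erase Finset.univ _ (Finset.mem_univ i), if_pos rfl,
    ← Finset.mul_prod_erase _ _ (Finset.mem_erase.mpr ⟨hji, Finset.mem_univ j⟩),
    if_neg hji, if_pos rfl]
  have hrest : (∏ a ∈ (Finset.univ.erase i).erase j,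
      (if a = i then v a else if a = j then w a else e)) = ∏ _a ∈ (Finset.univ.erase i).erase j, e := by
    refine Finset.prod_congr rfl (fun a ha => ?_)
    have ha' := Finset.mem_erase.mp ha
    have ha'' := Finset.mem_erase.mp ha'.2
    rw [if_neg ha''.1, if_neg ha'.1]
  rw [hrest, Finset.prod_const,
    Finset.card_erase_of_mem (Finset.mem_erase.mpr ⟨hji, Finset.mem_univ j⟩),
    Finset.card_erase_of_mem (Finset.mem_univ i), Finset.card_univ, Fintype.card_fin,
    show k - 1 - 1 = k - 2 by omega]
  ring

private lemma prod_ite_three_fn {k : ℕ} {i l n : Fin k} (hli : l ≠ i) (hni : n ≠ i)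
    (hnl : n ≠ l) (v w u : Fin k → ℝ) (e : ℝ) :
    (∏ a : Fin k, (if a = i then v a else if a = l then w a else if a = n then u a else e))
      = v i * w l * u n * e ^ (k - 3) := by
  rw [← Finset.mul_prod_erase Finset.univ _ (Finset.mem_univ i), if_pos rfl,
    ← Finset.mul_prod_erase _ _ (Finset.mem_erase.mpr ⟨hli, Finset.mem_univ l⟩),
    if_neg hli, if_pos rfl,
    ← Finset.mul_prod_erase _ _
      (Finset.mem_erase.mpr ⟨hnl, Finset.mem_erase.mpr ⟨hni, Finset.mem_univ n⟩⟩),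
    if_neg hni, if_neg hnl, if_pos rfl]
  have hrest : (∏ a ∈ ((Finset.univ.erase i).erase l).erase n,
      (if a = i then v a else if a = l then w a else if a = n then u a else e))
        = ∏ _a ∈ ((Finset.univ.erase i).erase l).erase n, e := by
    refine Finset.prod_congr rfl (fun a ha => ?_)
    have h1 := Finset.mem_erase.mp ha
    have h2 := Finset.mem_erase.mp h1.2
    have h3 := Finset.mem_erase.mp h2.2
    rw [if_neg h3.1, if_neg h2.1, if_neg h1.1]
  rw [hrest, Finset.prod_const,
    Finset.card_erase_of_mem
      (Finset.mem_erase.mpr ⟨hnl, Finset.mem_erase.mpr ⟨hni, Finset.mem_univ n⟩⟩),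
    Finset.card_erase_of_mem (Finset.mem_erase.mpr ⟨hli, Finset.mem_univ l⟩),
    Finset.card_erase_of_mem (Finset.mem_univ i), Finset.card_univ, Fintype.card_fin,
    show k - 1 - 1 - 1 = k - 3 by omega]
  ring

private lemma valA : ∫ t : ℝ, (((t ^ 2 - 2) * (t ^ 2 - 2)) * (t ^ 2 - 2)) * Real.exp (-t ^ 2 / 4)
    = 128 * Real.sqrt π := by
  have h := int_poly_aux (-8) 12 (-6) 1
  have he : ∀ t : ℝ, (1 * t ^ 6 + (-6) * t ^ 4 + 12 * t ^ 2 + (-8)) * Real.exp (-t ^ 2 / 4)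
      = (((t ^ 2 - 2) * (t ^ 2 - 2)) * (t ^ 2 - 2)) * Real.exp (-t ^ 2 / 4) := fun t => by ring
  simp_rw [he] at h
  norm_num at h
  exact h

private lemma valB : ∫ t : ℝ, ((t : ℝ) ^ 2 - 2) ^ 2 * Real.exp (-t ^ 2 / 4)
    = 16 * Real.sqrt π := by
  have h := int_poly_aux 4 (-4) 1 0
  have he : ∀ t : ℝ, (0 * t ^ 6 + 1 * t ^ 4 + (-4) * t ^ 2 + 4) * Real.exp (-t ^ 2 / 4)
      = ((t : ℝ) ^ 2 - 2) ^ 2 * Real.exp (-t ^ 2 / 4) := fun t => by ring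
  simp_rw [he] at h
  norm_num at h
  exact h

private lemma valC : ∫ t : ℝ, (1 : ℝ) * Real.exp (-t ^ 2 / 4) = 2 * Real.sqrt π := by
  have h := int_poly_aux 1 0 0 0
  have he : ∀ t : ℝ, (0 * t ^ 6 + 0 * t ^ 4 + 0 * t ^ 2 + 1) * Real.exp (-t ^ 2 / 4)
      = (1 : ℝ) * Real.exp (-t ^ 2 / 4) := fun t => by ring
  simp_rw [he] at h
  norm_num at h
  simpa using h

private lemma valD : ∫ t : ℝ, (4 * t ^ 4 - 8 * t ^ 2 : ℝ) * Real.exp (-t ^ 2 / 4)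
    = 64 * Real.sqrt π := by
  have h := int_poly_aux 0 (-8) 4 0
  have he : ∀ t : ℝ, (0 * t ^ 6 + 4 * t ^ 4 + (-8) * t ^ 2 + 0) * Real.exp (-t ^ 2 / 4)
      = (4 * t ^ 4 - 8 * t ^ 2 : ℝ) * Real.exp (-t ^ 2 / 4) := fun t => by ring
  simp_rw [he] at h
  norm_num at h
  exact h

private lemma valE : ∫ t : ℝ, ((t : ℝ) ^ 2) * Real.exp (-t ^ 2 / 4) = 4 * Real.sqrt π :=
  mom2_aux

private lemma valF : ∫ t : ℝ, (8 * t ^ 2 : ℝ) * Real.exp (-t ^ 2 / 4) = 32 * Real.sqrt π := by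
  have h := int_poly_aux 0 8 0 0
  have he : ∀ t : ℝ, (0 * t ^ 6 + 0 * t ^ 4 + 8 * t ^ 2 + 0) * Real.exp (-t ^ 2 / 4)
      = (8 * t ^ 2 : ℝ) * Real.exp (-t ^ 2 / 4) := fun t => by ring
  simp_rw [he] at h
  norm_num at h
  exact h

end Aux

/-- Triple-product identities among the neutral-mode eigenfunctions
`ψ_{ii} = y_i² − 2`, `ψ_{ab} = 2 y_a y_b` with respect to the Gaussian inner product. -/
theorem stmt_5 (k : ℕ) (hk : 3 ≤ k) (i j ℓ m : Fin k)
    (hij : i ≠ j) (hiℓ : i ≠ ℓ) (him : i ≠ m) (hℓm : ℓ ≠ m) :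
    (∫ y : EuclideanSpace ℝ (Fin k),
        (((y i) ^ 2 - 2) * ((y i) ^ 2 - 2)) * ((y i) ^ 2 - 2) * Real.exp (-‖y‖ ^ 2 / 4))
      = 8 * (∫ y : EuclideanSpace ℝ (Fin k),
          ((y i) ^ 2 - 2) ^ 2 * Real.exp (-‖y‖ ^ 2 / 4)) ∧
    (∫ y : EuclideanSpace ℝ (Fin k),
        ((2 * y i * y j) * (2 * y i * y j)) * ((y i) ^ 2 - 2) * Real.exp (-‖y‖ ^ 2 / 4))
      = 8 * (∫ y : EuclideanSpace ℝ (Fin k),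
          ((y i) ^ 2 - 2) ^ 2 * Real.exp (-‖y‖ ^ 2 / 4)) ∧
    (∫ y : EuclideanSpace ℝ (Fin k),
        ((2 * y i * y m) * (2 * y i * y ℓ)) * (2 * y ℓ * y m) * Real.exp (-‖y‖ ^ 2 / 4))
      = 8 * (∫ y : EuclideanSpace ℝ (Fin k),
          ((y i) ^ 2 - 2) ^ 2 * Real.exp (-‖y‖ ^ 2 / 4)) := by
  set s := Real.sqrt π with hs
  -- the common right-hand side
  have hR : (∫ y : EuclideanSpace ℝ (Fin k), ((y i) ^ 2 - 2) ^ 2 * Real.exp (-‖y‖ ^ 2 / 4))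
      = (16 * s) * (2 * s) ^ (k - 1) := by
    have hrw : (∫ y : EuclideanSpace ℝ (Fin k), ((y i) ^ 2 - 2) ^ 2 * Real.exp (-‖y‖ ^ 2 / 4))
        = ∫ y : EuclideanSpace ℝ (Fin k),
            (∏ a, (if a = i then ((y a) ^ 2 - 2) ^ 2 else 1)) * Real.exp (-‖y‖ ^ 2 / 4) := by
      congr 1; funext y; congr 1
      rw [prod_ite_one_fn i (fun a => ((y a) ^ 2 - 2) ^ 2) 1]
      simp
    rw [hrw, gauss_prod_aux (fun a t => if a = i then (t ^ 2 - 2) ^ 2 else 1)]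
    have hval : ∀ a : Fin k,
        (∫ t : ℝ, (if a = i then (t ^ 2 - 2) ^ 2 else 1) * Real.exp (-t ^ 2 / 4))
          = if a = i then 16 * s else 2 * s := by
      intro a
      by_cases h : a = i
      · simp only [if_pos h]; exact valB
      · simp only [if_neg h]; exact valC
    rw [Finset.prod_congr rfl (fun a _ => hval a),
      prod_ite_one_fn i (fun _ => 16 * s) (2 * s)]
  refine ⟨?_, ?_, ?_⟩
  · -- case 1
    have hrw : (∫ y : EuclideanSpace ℝ (Fin k),
          (((y i) ^ 2 - 2) * ((y i) ^ 2 - 2)) * ((y i) ^ 2 - 2) * Real.exp (-‖y‖ ^ 2 / 4))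
        = ∫ y : EuclideanSpace ℝ (Fin k),
            (∏ a, (if a = i then ((y a) ^ 2 - 2) * ((y a) ^ 2 - 2) * ((y a) ^ 2 - 2) else 1))
              * Real.exp (-‖y‖ ^ 2 / 4) := by
      congr 1; funext y; congr 1
      rw [prod_ite_one_fn i
        (fun a => ((y a) ^ 2 - 2) * ((y a) ^ 2 - 2) * ((y a) ^ 2 - 2)) 1]
      simp
    rw [hrw, gauss_prod_aux
      (fun a t => if a = i then (t ^ 2 - 2) * (t ^ 2 - 2) * (t ^ 2 - 2) else 1), hR]
    have hval : ∀ a : Fin k,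
        (∫ t : ℝ, (if a = i then (t ^ 2 - 2) * (t ^ 2 - 2) * (t ^ 2 - 2) else 1)
              * Real.exp (-t ^ 2 / 4))
          = if a = i then 128 * s else 2 * s := by
      intro a
      by_cases h : a = i
      · simp only [if_pos h]; exact valA
      · simp only [if_neg h]; exact valC
    rw [Finset.prod_congr rfl (fun a _ => hval a),
      prod_ite_one_fn i (fun _ => 128 * s) (2 * s)]
    ring
  · -- case 2
    have hrw : (∫ y : EuclideanSpace ℝ (Fin k),
          ((2 * y i * y j) * (2 * y i * y j)) * ((y i) ^ 2 - 2) * Real.exp (-‖y‖ ^ 2 / 4))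
        = ∫ y : EuclideanSpace ℝ (Fin k),
            (∏ a, (if a = i then 4 * (y a) ^ 4 - 8 * (y a) ^ 2
              else if a = j then (y a) ^ 2 else 1)) * Real.exp (-‖y‖ ^ 2 / 4) := by
      congr 1; funext y; congr 1
      rw [prod_ite_two_fn hij.symm (fun a => 4 * (y a) ^ 4 - 8 * (y a) ^ 2)
        (fun a => (y a) ^ 2) 1]
      simp only [one_pow, mul_one]
      ring
    rw [hrw, gauss_prod_aux
      (fun a t => if a = i then 4 * t ^ 4 - 8 * t ^ 2 else if a = j then t ^ 2 else 1), hR]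
    have hval : ∀ a : Fin k,
        (∫ t : ℝ, (if a = i then 4 * t ^ 4 - 8 * t ^ 2 else if a = j then t ^ 2 else 1)
              * Real.exp (-t ^ 2 / 4))
          = if a = i then 64 * s else if a = j then 4 * s else 2 * s := by
      intro a
      by_cases h : a = i
      · simp only [if_pos h]; exact valD
      · by_cases h' : a = j
        · simp only [if_neg h, if_pos h']; exact valE
        · simp only [if_neg h, if_neg h']; exact valC
    rw [Finset.prod_congr rfl (fun a _ => hval a),
      prod_ite_two_fn hij.symm (fun _ => 64 * s) (fun _ => 4 * s) (2 * s)]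
    rw [show k - 1 = (k - 2) + 1 by omega, pow_succ]
    ring
  · -- case 3
    have hrw : (∫ y : EuclideanSpace ℝ (Fin k),
          ((2 * y i * y m) * (2 * y i * y ℓ)) * (2 * y ℓ * y m) * Real.exp (-‖y‖ ^ 2 / 4))
        = ∫ y : EuclideanSpace ℝ (Fin k),
            (∏ a, (if a = i then 8 * (y a) ^ 2 else if a = ℓ then (y a) ^ 2
              else if a = m then (y a) ^ 2 else 1)) * Real.exp (-‖y‖ ^ 2 / 4) := by
      congr 1; funext y; congr 1
      rw [prod_ite_three_fn hiℓ.symm him.symm hℓm.symm (fun a => 8 * (y a) ^ 2)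
        (fun a => (y a) ^ 2) (fun a => (y a) ^ 2) 1]
      simp only [one_pow, mul_one]
      ring
    rw [hrw, gauss_prod_aux
      (fun a t => if a = i then 8 * t ^ 2 else if a = ℓ then t ^ 2
        else if a = m then t ^ 2 else 1), hR]
    have hval : ∀ a : Fin k,
        (∫ t : ℝ, (if a = i then 8 * t ^ 2 else if a = ℓ then t ^ 2
              else if a = m then t ^ 2 else 1) * Real.exp (-t ^ 2 / 4))
          = if a = i then 32 * s else if a = ℓ then 4 * s else if a = m then 4 * s
            else 2 * s := by
      intro a
      by_cases h : a = i
      · simp only [if_pos h]; exact valF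
      · by_cases h' : a = ℓ
        · simp only [if_neg h, if_pos h']; exact valE
        · by_cases h'' : a = m
          · simp only [if_neg h, if_neg h', if_pos h'']; exact valE
          · simp only [if_neg h, if_neg h', if_neg h'']; exact valC
    rw [Finset.prod_congr rfl (fun a _ => hval a),
      prod_ite_three_fn hiℓ.symm him.symm hℓm.symm (fun _ => 32 * s) (fun _ => 4 * s)
        (fun _ => 4 * s) (2 * s)]
    rw [show k - 1 = (k - 3) + 2 by omega, pow_add]
    ring
end

section
/- For every integer k ≥ 1, let B be the k×k real matrix with entries: B_{1,1} = −(2k−1); B_{j,1} = −k for 2 ≤ j ≤ k; B_{j,j} = −(k−j) for 2 ≤ j ≤ k; B_{j,j+1} = k−j for 1 ≤ j ≤ k−1; and all other entries zero. Then the eigenvalues of B are exactly −1, −2, …, −k (each with multiplicity one); equivalently, the characteristic polynomial of B is ∏_{i=1}^{k} (λ + i). -/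
/-- The constant matrix `B` from the Merle–Zaag ODE system for `k`-ovals
(0-indexed: row/column `a` corresponds to `j = a + 1`). -/
noncomputable def Bmat (k : ℕ) : Matrix (Fin k) (Fin k) ℝ := fun a b =>
  if b.val = 0 then (if a.val = 0 then -(2 * (k : ℝ) - 1) else -(k : ℝ))
  else if a = b then -((k : ℝ) - ((a.val : ℝ) + 1))
  else if b.val = a.val + 1 then (k : ℝ) - ((a.val : ℝ) + 1)
  else 0

open Polynomial Matrix Finset in
/-- The leading principal minors of the characteristic matrix of `Bmat k`. -/
noncomputable def Mg (k n : ℕ) : Matrix (Fin n) (Fin n) ℝ[X] := fun a b =>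
  if b.val = 0 then (if a.val = 0 then X + C (2 * (k : ℝ) - 1) else C (k : ℝ))
  else if a = b then X + C ((k : ℝ) - ((a.val : ℝ) + 1))
  else if b.val = a.val + 1 then -C ((k : ℝ) - ((a.val : ℝ) + 1))
  else 0

open Polynomial Matrix Finset in
lemma Mg_det_key (k : ℕ) : ∀ n, 1 ≤ n → n ≤ k →
    X * (Mg k n).det =
      (∏ i ∈ range (n + 1), (X + C ((k : ℝ) - n + i))) -
        C (∏ i ∈ range (n + 1), ((k : ℝ) - n + i)) := by
  intro n h1
  induction n, h1 using Nat.le_induction with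
  | base =>
    intro _
    rw [show (Mg k 1).det = Mg k 1 0 0 from Matrix.det_fin_one _,
      show Mg k 1 0 0 = X + C (2 * (k : ℝ) - 1) by simp [Mg]]
    simp only [prod_range_succ, prod_range_zero, one_mul]
    push_cast
    simp only [map_sub, map_add, _root_.map_mul, _root_.map_one, map_ofNat, Polynomial.C_0, Polynomial.C_1, map_neg, map_pow, _root_.map_one]
    ring
  | succ n h1 IH =>
    intro hnk
    have IH' := IH (le_of_lt hnk)
    have hn0 : n ≠ 0 := by omega
    have h0l : (0 : Fin (n + 1)) ≠ Fin.last n := by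
      simp only [ne_eq, Fin.ext_iff, Fin.val_zero, Fin.val_last]; omega
    -- the last row has only two nonzero entries
    have hrow : ∀ j : Fin (n + 1), j ≠ 0 → j ≠ Fin.last n →
        Mg k (n + 1) (Fin.last n) j = 0 := by
      intro j hj0 hjl
      have hv0 : ¬ j.val = 0 := fun h => hj0 (Fin.ext h)
      have hne : ¬ (Fin.last n) = j := fun h => hjl h.symm
      have hsup : ¬ j.val = (Fin.last n).val + 1 := by
        have := j.isLt; simp only [Fin.val_last]; omega
      simp only [Mg, if_neg hv0, if_neg hne, if_neg hsup]
    have e0 : Mg k (n + 1) (Fin.last n) 0 = C (k : ℝ) := by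
      simp [Mg, hn0]
    have el : Mg k (n + 1) (Fin.last n) (Fin.last n) = X + C ((k : ℝ) - ((n : ℝ) + 1)) := by
      simp [Mg, hn0]
    -- the minor obtained by deleting the last row and the last column
    have hminor_last : (Mg k (n + 1)).submatrix (Fin.last n).succAbove (Fin.last n).succAbove
        = Mg k n := by
      ext a b
      simp only [Matrix.submatrix_apply, Fin.succAbove_last, Mg, Fin.coe_castSucc,
        Fin.castSucc_inj]
    -- the minor obtained by deleting the last row and the 0-th column
    have hminor0 : ((Mg k (n + 1)).submatrix (Fin.last n).succAbove
        (0 : Fin (n + 1)).succAbove).det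
        = (-1) ^ n * C (∏ a ∈ range n, ((k : ℝ) - 1 - (a : ℝ))) := by
      rw [Matrix.det_of_lowerTriangular]
      · have hdiag : ∀ i : Fin n, ((Mg k (n + 1)).submatrix (Fin.last n).succAbove
            (0 : Fin (n + 1)).succAbove) i i = -C ((k : ℝ) - ((i : ℝ) + 1)) := by
          intro i
          have h2 : ¬ (Fin.castSucc i) = Fin.succ i := by
            simp only [Fin.ext_iff, Fin.coe_castSucc, Fin.val_succ]; omega
          simp only [Matrix.submatrix_apply, Fin.succAbove_last, Fin.succAbove_zero]
          simp only [Mg, Fin.val_succ, Fin.coe_castSucc]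
          rw [if_neg (by omega : ¬ (i : ℕ) + 1 = 0), if_neg h2]
          simp
        rw [Finset.prod_congr rfl fun i _ => hdiag i,
          Finset.prod_congr rfl fun (i : Fin n) (_ : i ∈ Finset.univ) =>
            (neg_one_mul (C ((k : ℝ) - ((i : ℝ) + 1)))).symm]
        rw [Finset.prod_mul_distrib, Finset.prod_const, Finset.card_univ, Fintype.card_fin,
          ← map_prod]
        rw [← Fin.prod_univ_eq_prod_range (fun a => ((k : ℝ) - 1 - (a : ℝ)))]
        have hpr : (∏ x : Fin n, ((k : ℝ) - ((x : ℝ) + 1)))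
            = ∏ i : Fin n, ((k : ℝ) - 1 - (i : ℝ)) :=
          Finset.prod_congr rfl fun i _ => by ring
        rw [hpr]
      · intro i j hij
        have hij' : (i : ℕ) < (j : ℕ) := hij
        have h2 : ¬ (Fin.castSucc i) = Fin.succ j := by
          simp only [Fin.ext_iff, Fin.coe_castSucc, Fin.val_succ]; omega
        simp only [Matrix.submatrix_apply, Fin.succAbove_last, Fin.succAbove_zero]
        simp only [Mg, Fin.val_succ, Fin.coe_castSucc]
        rw [if_neg (by omega : ¬ (j : ℕ) + 1 = 0), if_neg h2,
          if_neg (by omega : ¬ (j : ℕ) + 1 = (i : ℕ) + 1)]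
    -- Laplace expansion along the last row
    rw [Matrix.det_succ_row (Mg k (n + 1)) (Fin.last n)]
    rw [Finset.sum_eq_add_of_mem (0 : Fin (n + 1)) (Fin.last n) (Finset.mem_univ _)
      (Finset.mem_univ _) h0l (fun c _ hc => by
        rw [hrow c hc.1 hc.2, mul_zero, zero_mul])]
    rw [e0, el, hminor_last, hminor0]
    simp only [Fin.val_last, Fin.val_zero, Nat.add_zero]
    -- product identities
    have hcongr : ∀ j ∈ range n, (k : ℝ) - (n : ℝ) + ((n - 1 - j : ℕ) : ℝ)
        = (k : ℝ) - 1 - (j : ℝ) := by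
      intro j hj
      have hj' : j < n := Finset.mem_range.mp hj
      have hc : ((n - 1 - j : ℕ) : ℝ) = (n : ℝ) - 1 - (j : ℝ) := by
        have he : n - 1 - j = n - (1 + j) := by omega
        rw [he, Nat.cast_sub (by omega)]
        push_cast; ring
      rw [hc]; ring
    have hp : (k : ℝ) * ∏ a ∈ range n, ((k : ℝ) - 1 - (a : ℝ))
        = ∏ i ∈ range (n + 1), ((k : ℝ) - (n : ℝ) + (i : ℝ)) := by
      rw [prod_range_succ, ← Finset.prod_range_reflect (fun j : ℕ => (k : ℝ) - (n : ℝ) + (j : ℝ)) n,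
        Finset.prod_congr rfl hcongr,
        show (k : ℝ) - (n : ℝ) + (n : ℝ) = (k : ℝ) from by ring, mul_comm]
    have hCp : C (k : ℝ) * C (∏ a ∈ range n, ((k : ℝ) - 1 - (a : ℝ)))
        = C (∏ i ∈ range (n + 1), ((k : ℝ) - (n : ℝ) + (i : ℝ))) := by
      rw [← C_mul, hp]
    have hPP : (∏ i ∈ range (n + 1 + 1), (X + C ((k : ℝ) - ((n : ℝ) + 1) + (i : ℝ))))
        = (X + C ((k : ℝ) - ((n : ℝ) + 1)))
          * ∏ i ∈ range (n + 1), (X + C ((k : ℝ) - (n : ℝ) + (i : ℝ))) := by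
      rw [Finset.prod_range_succ'
        (fun i : ℕ => X + C ((k : ℝ) - ((n : ℝ) + 1) + (i : ℝ))) (n + 1), mul_comm]
      congr 1
      · norm_num
      · refine Finset.prod_congr rfl fun i _ => ?_
        congr 2
        push_cast; ring
    have hcc : (∏ i ∈ range (n + 1 + 1), ((k : ℝ) - ((n : ℝ) + 1) + (i : ℝ)))
        = ((k : ℝ) - ((n : ℝ) + 1)) * ∏ i ∈ range (n + 1), ((k : ℝ) - (n : ℝ) + (i : ℝ)) := by
      rw [Finset.prod_range_succ'
        (fun i : ℕ => (k : ℝ) - ((n : ℝ) + 1) + (i : ℝ)) (n + 1), mul_comm]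
      congr 1
      · norm_num
      · refine Finset.prod_congr rfl fun i _ => ?_
        push_cast; ring
    have hsign : ((-1 : ℝ[X]) ^ n) * ((-1 : ℝ[X]) ^ n) = 1 := by
      rw [← pow_add]; exact Even.neg_one_pow ⟨n, rfl⟩
    have hsign2 : ((-1 : ℝ[X]) ^ (n + n)) = 1 := Even.neg_one_pow ⟨n, rfl⟩
    push_cast
    rw [hPP, hcc, C_mul, hsign2, one_mul]
    have hterm : (-1 : ℝ[X]) ^ n * C (k : ℝ)
        * ((-1 : ℝ[X]) ^ n * C (∏ a ∈ range n, ((k : ℝ) - 1 - (a : ℝ))))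
        = C (∏ i ∈ range (n + 1), ((k : ℝ) - (n : ℝ) + (i : ℝ))) := by
      calc (-1 : ℝ[X]) ^ n * C (k : ℝ)
          * ((-1 : ℝ[X]) ^ n * C (∏ a ∈ range n, ((k : ℝ) - 1 - (a : ℝ))))
          = ((-1 : ℝ[X]) ^ n * (-1 : ℝ[X]) ^ n)
            * (C (k : ℝ) * C (∏ a ∈ range n, ((k : ℝ) - 1 - (a : ℝ)))) := by ring
        _ = _ := by rw [hsign, one_mul, hCp]
    linear_combination (X + C ((k : ℝ) - ((n : ℝ) + 1))) * IH' + X * hterm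

open Polynomial Matrix Finset in
/-- The eigenvalues of `B` are exactly `−1, −2, …, −k`, each with multiplicity one:
its characteristic polynomial is `∏_{i=1}^{k} (X + i)`. -/
theorem stmt_7 (k : ℕ) (hk : 1 ≤ k) :
    (Bmat k).charpoly = ∏ i ∈ Finset.range k, (Polynomial.X + Polynomial.C ((i : ℝ) + 1)) := by
  have hchar : charmatrix (Bmat k) = Mg k k := by
    ext a b : 2
    by_cases hab : a = b
    · subst hab
      rw [charmatrix_apply_eq]
      by_cases h0 : a.val = 0
      · simp only [Bmat, Mg, if_pos h0, map_neg, sub_neg_eq_add]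
      · simp only [Bmat, Mg, if_neg h0, if_pos rfl, if_true, map_neg, sub_neg_eq_add]
    · rw [charmatrix_apply_ne _ _ _ hab]
      by_cases h0 : b.val = 0
      · have ha0 : ¬ a.val = 0 := fun h => hab (Fin.ext (by omega))
        simp only [Bmat, Mg, if_pos h0, if_neg ha0, map_neg, neg_neg]
      · by_cases hsup : b.val = a.val + 1
        · simp only [Bmat, Mg, if_neg h0, if_neg hab, if_pos hsup]
        · simp only [Bmat, Mg, if_neg h0, if_neg hab, if_neg hsup, map_zero, neg_zero]
  have key := Mg_det_key k k hk le_rfl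
  rw [← hchar] at key
  apply mul_left_cancel₀ (Polynomial.X_ne_zero (R := ℝ))
  rw [show (Bmat k).charpoly = (charmatrix (Bmat k)).det from rfl, key]
  have h0c : (k : ℝ) - (k : ℝ) + ((0 : ℕ) : ℝ) = 0 := by norm_num
  have hzero : (∏ i ∈ range (k + 1), ((k : ℝ) - (k : ℝ) + (i : ℝ))) = 0 :=
    Finset.prod_eq_zero (Finset.mem_range.mpr (Nat.succ_pos k)) h0c
  rw [hzero, map_zero, sub_zero,
    Finset.prod_range_succ' (fun i : ℕ => X + C ((k : ℝ) - (k : ℝ) + (i : ℝ))) k]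
  have hX0 : X + C ((k : ℝ) - (k : ℝ) + ((0 : ℕ) : ℝ)) = X := by
    rw [h0c, Polynomial.C_0, add_zero]
  rw [hX0, mul_comm]
  congr 1
  refine Finset.prod_congr rfl fun i _ => ?_
  congr 1
  push_cast; ring
end

section
/- Let m ≥ 0 be a real number, v₀ > 0, and F ∈ C¹([0, v₀]). Then ∫₀^{v₀} (F(v) − F(v₀))² v^m dv ≤ (v₀² / (m+1)) ∫₀^{v₀} F'(v)² v^m dv. -/
open MeasureTheory intervalIntegral

lemma cs_integral {α : Type*} [MeasurableSpace α] (μ : Measure α) (f g : α → ℝ)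
    (hf : Integrable (fun x => f x ^ 2) μ) (hg : Integrable (fun x => g x ^ 2) μ)
    (hfg : Integrable (fun x => f x * g x) μ) :
    (∫ x, f x * g x ∂μ) ^ 2 ≤ (∫ x, f x ^ 2 ∂μ) * ∫ x, g x ^ 2 ∂μ := by
  have key : ∀ t : ℝ, 0 ≤ (∫ x, f x ^ 2 ∂μ) * (t * t) + (2 * ∫ x, f x * g x ∂μ) * t
      + ∫ x, g x ^ 2 ∂μ := by
    intro t
    have h1 : 0 ≤ ∫ x, (t * f x + g x) ^ 2 ∂μ := integral_nonneg fun x => sq_nonneg _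
    have h2 : ∫ x, (t * f x + g x) ^ 2 ∂μ
        = (t * t) * ∫ x, f x ^ 2 ∂μ + ((2 * t) * ∫ x, f x * g x ∂μ + ∫ x, g x ^ 2 ∂μ) := by
      have e : (fun x => (t * f x + g x) ^ 2)
          = fun x => (t * t) * f x ^ 2 + ((2 * t) * (f x * g x) + g x ^ 2) := by
        funext x; ring
      rw [e, integral_add (hf.const_mul _) ((hfg.const_mul _).add hg) (f := fun x => t * t * f x ^ 2) (g := fun x => 2 * t * (f x * g x) + g x ^ 2),
        integral_add (hfg.const_mul _) hg (f := fun x => 2 * t * (f x * g x)),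
        MeasureTheory.integral_const_mul, MeasureTheory.integral_const_mul]
    nlinarith [h1, h2]
  have hd := discrim_le_zero key
  rw [discrim] at hd
  nlinarith [hd]

/-- One-dimensional weighted Poincaré inequality with power weight `v^m`:
`∫₀^{v₀} (F(v) − F(v₀))² v^m dv ≤ (v₀²/(m+1)) ∫₀^{v₀} F'(v)² v^m dv`. -/
theorem stmt_13 (m v₀ : ℝ) (hm : 0 ≤ m) (hv₀ : 0 < v₀)
    (F F' : ℝ → ℝ) (hF : ∀ v ∈ Set.Icc (0 : ℝ) v₀, HasDerivAt F (F' v) v)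
    (hF' : ContinuousOn F' (Set.Icc (0 : ℝ) v₀)) :
    (∫ v in (0 : ℝ)..v₀, (F v - F v₀) ^ 2 * v ^ m) ≤
      (v₀ ^ 2 / (m + 1)) * ∫ v in (0 : ℝ)..v₀, (F' v) ^ 2 * v ^ m := by
  
  -- choose auxiliary exponent p
  set p : ℝ := if m < 1 then m else m + 1 with hp_def
  have hmp : m ≤ p := by by_cases h : m < 1 <;> simp [hp_def, h] <;> linarith
  have hpm1 : p ≤ m + 1 := by by_cases h : m < 1 <;> simp [hp_def, h] <;> linarith
  have hp1 : p ≠ 1 := by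
    by_cases h : m < 1 <;> simp [hp_def, h]
    · exact ne_of_lt h
    · intro hc; push_neg at h; linarith
  have hp0 : 0 ≤ p := hm.trans hmp
  have h1p : (1 : ℝ) - p ≠ 0 := sub_ne_zero.mpr (Ne.symm hp1)
  have hm1 : (0:ℝ) < m + 1 := by linarith
  have hm2p : (1:ℝ) ≤ m + 2 - p := by linarith
  -- continuity helpers
  have hrpow : ∀ q : ℝ, 0 ≤ q → ContinuousOn (fun s : ℝ => s ^ q) (Set.Icc 0 v₀) :=
    fun q hq => continuousOn_id.rpow_const fun x _ => Or.inr hq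
  have hFc : ContinuousOn F (Set.Icc 0 v₀) :=
    fun v hv => (hF v hv).continuousAt.continuousWithinAt
  -- the right-hand integrand
  set φ : ℝ → ℝ := fun s => F' s ^ 2 * s ^ m with hφ_def
  have hφc : ContinuousOn φ (Set.Icc 0 v₀) := (hF'.pow 2).mul (hrpow m hm)
  have hφint : IntegrableOn φ (Set.Ioc 0 v₀) :=
    (hφc.integrableOn_Icc).mono_set Set.Ioc_subset_Icc_self
  set Jv : ℝ := ∫ s in Set.Ioc 0 v₀, φ s with hJv_def
  have hJ : (∫ v in (0 : ℝ)..v₀, (F' v) ^ 2 * v ^ m) = Jv := integral_of_le hv₀.le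
  have hφnn : ∀ s ∈ Set.Ioc (0:ℝ) v₀, 0 ≤ φ s :=
    fun s hs => mul_nonneg (sq_nonneg _) (Real.rpow_nonneg hs.1.le m)
  have hJ0 : 0 ≤ Jv := setIntegral_nonneg measurableSet_Ioc hφnn
  -- constants
  set c₁ : ℝ := v₀ ^ (p - m) * v₀ ^ (1 - p) / (1 - p) with hc₁
  set c₂ : ℝ := v₀ ^ (p - m) / (1 - p) with hc₂
  set K : ℝ → ℝ := fun v => (c₁ * v ^ m - c₂ * v ^ (m + 1 - p)) * Jv with hK_def
  -- pointwise estimate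
  have key : ∀ v ∈ Set.Ioc (0:ℝ) v₀, (F v - F v₀) ^ 2 * v ^ m ≤ K v := by
    rintro v ⟨hv, hvv₀⟩
    have hsub : Set.uIcc v v₀ ⊆ Set.Icc 0 v₀ := by
      rw [Set.uIcc_of_le hvv₀]
      exact Set.Icc_subset_Icc hv.le le_rfl
    -- FTC
    have hftc : (∫ s in v..v₀, F' s) = F v₀ - F v :=
      integral_eq_sub_of_hasDerivAt (fun s hs => hF s (hsub hs))
        ((hF'.mono hsub).intervalIntegrable)
    -- Cauchy–Schwarz on Ioc v v₀
    set a : ℝ → ℝ := fun s => F' s * s ^ (p / 2) with ha_def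
    set b : ℝ → ℝ := fun s => s ^ (-(p / 2)) with hb_def
    have hsubI : Set.Icc v v₀ ⊆ Set.Icc 0 v₀ := Set.Icc_subset_Icc hv.le le_rfl
    have hpos : ∀ s ∈ Set.Icc v v₀, (0:ℝ) < s := fun s hs => lt_of_lt_of_le hv hs.1
    have hac : ContinuousOn a (Set.Icc v v₀) :=
      (hF'.mono hsubI).mul (continuousOn_id.rpow_const fun x hx => Or.inl (hpos x hx).ne')
    have hbc : ContinuousOn b (Set.Icc v v₀) :=
      continuousOn_id.rpow_const fun x hx => Or.inl (hpos x hx).ne'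
    have ha2 : IntegrableOn (fun s => a s ^ 2) (Set.Ioc v v₀) :=
      ((hac.pow 2).integrableOn_Icc).mono_set Set.Ioc_subset_Icc_self
    have hb2 : IntegrableOn (fun s => b s ^ 2) (Set.Ioc v v₀) :=
      ((hbc.pow 2).integrableOn_Icc).mono_set Set.Ioc_subset_Icc_self
    have hab : IntegrableOn (fun s => a s * b s) (Set.Ioc v v₀) :=
      ((hac.mul hbc).integrableOn_Icc).mono_set Set.Ioc_subset_Icc_self
    have hcs := cs_integral (volume.restrict (Set.Ioc v v₀)) a b ha2 hb2 hab
    -- identify ∫ a*b with F v₀ - F v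
    have hab_eq : (∫ s in Set.Ioc v v₀, a s * b s) = F v₀ - F v := by
      rw [← hftc, integral_of_le hvv₀]
      refine setIntegral_congr_fun measurableSet_Ioc fun s hs => ?_
      have hs0 : (0:ℝ) < s := hv.trans hs.1
      simp only [ha_def, hb_def]
      rw [mul_assoc, ← Real.rpow_add hs0]
      simp
    -- identify ∫ a² with ∫ F'² s^p and bound it
    have ha2_eq : (∫ s in Set.Ioc v v₀, a s ^ 2) = ∫ s in Set.Ioc v v₀, F' s ^ 2 * s ^ p := by
      refine setIntegral_congr_fun measurableSet_Ioc fun s hs => ?_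
      have hs0 : (0:ℝ) < s := hv.trans hs.1
      simp only [ha_def]
      rw [mul_pow, pow_two (s ^ (p/2)), ← Real.rpow_add hs0, add_halves]
    have hb2_eq : (∫ s in Set.Ioc v v₀, b s ^ 2) = ∫ s in Set.Ioc v v₀, s ^ (-p) := by
      refine setIntegral_congr_fun measurableSet_Ioc fun s hs => ?_
      have hs0 : (0:ℝ) < s := hv.trans hs.1
      simp only [hb_def]
      rw [pow_two, ← Real.rpow_add hs0, show -(p/2) + -(p/2) = -p by ring]
    -- compute ∫ s^(-p)
    have hA : (∫ s in Set.Ioc v v₀, s ^ (-p)) = (v₀ ^ (1 - p) - v ^ (1 - p)) / (1 - p) := by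
      rw [← integral_of_le hvv₀, integral_rpow]
      · norm_num [sub_eq_add_neg, add_comm]
      · refine Or.inr ⟨by intro hc; apply hp1; linarith [neg_eq_iff_eq_neg.mp hc], ?_⟩
        rw [Set.uIcc_of_le hvv₀]
        exact fun hc => absurd hc.1 (not_le.mpr hv)
    have hA0 : 0 ≤ (v₀ ^ (1 - p) - v ^ (1 - p)) / (1 - p) := by
      rw [← hA]
      exact setIntegral_nonneg measurableSet_Ioc fun s hs =>
        Real.rpow_nonneg (hv.trans hs.1).le _
    -- bound ∫ F'² s^p ≤ v₀^(p-m) * Jv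
    have hbound : (∫ s in Set.Ioc v v₀, F' s ^ 2 * s ^ p) ≤ v₀ ^ (p - m) * Jv := by
      have step1 : (∫ s in Set.Ioc v v₀, F' s ^ 2 * s ^ p)
          ≤ ∫ s in Set.Ioc v v₀, v₀ ^ (p - m) * φ s := by
        refine setIntegral_mono_on ?_ ?_ measurableSet_Ioc fun s hs => ?_
        · have hc : ContinuousOn (fun s : ℝ => F' s ^ 2 * s ^ p) (Set.Icc v v₀) :=
            ((hF'.mono hsubI).pow 2).mul
              (continuousOn_id.rpow_const fun x hx => Or.inl (hpos x hx).ne')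
          exact (hc.integrableOn_Icc).mono_set Set.Ioc_subset_Icc_self
        · exact ((hφint.mono_set (Set.Ioc_subset_Ioc_left hv.le)).const_mul _)
        · have hs0 : (0:ℝ) < s := hv.trans hs.1
          have : s ^ p = s ^ m * s ^ (p - m) := by
            rw [← Real.rpow_add hs0]; ring_nf
          rw [this, hφ_def]
          have h1 : s ^ (p - m) ≤ v₀ ^ (p - m) :=
            Real.rpow_le_rpow hs0.le hs.2 (by linarith)
          calc F' s ^ 2 * (s ^ m * s ^ (p - m))
              ≤ F' s ^ 2 * (s ^ m * v₀ ^ (p - m)) := by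
                refine mul_le_mul_of_nonneg_left ?_ (sq_nonneg _)
                exact mul_le_mul_of_nonneg_left h1 (Real.rpow_nonneg hs0.le m)
            _ = v₀ ^ (p - m) * (F' s ^ 2 * s ^ m) := by ring
      have step2 : (∫ s in Set.Ioc v v₀, v₀ ^ (p - m) * φ s)
          ≤ v₀ ^ (p - m) * Jv := by
        rw [MeasureTheory.integral_const_mul]
        refine mul_le_mul_of_nonneg_left ?_ (Real.rpow_nonneg hv₀.le _)
        refine setIntegral_mono_set hφint ?_
          ((Set.Ioc_subset_Ioc_left hv.le).eventuallyLE)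
        exact (ae_restrict_iff' measurableSet_Ioc).mpr (ae_of_all _ hφnn)
      exact step1.trans step2
    -- combine
    rw [hab_eq, ha2_eq, hb2_eq, hA] at hcs
    have hsq : (F v - F v₀) ^ 2 = (F v₀ - F v) ^ 2 := by ring
    have hvm : (0:ℝ) ≤ v ^ m := Real.rpow_nonneg hv.le m
    have hfinal : (F v - F v₀) ^ 2 ≤ v₀ ^ (p - m) * Jv * ((v₀ ^ (1 - p) - v ^ (1 - p)) / (1 - p)) := by
      rw [hsq]
      calc (F v₀ - F v) ^ 2
          ≤ (∫ s in Set.Ioc v v₀, F' s ^ 2 * s ^ p) * ((v₀ ^ (1 - p) - v ^ (1 - p)) / (1 - p)) := hcs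
        _ ≤ v₀ ^ (p - m) * Jv * ((v₀ ^ (1 - p) - v ^ (1 - p)) / (1 - p)) :=
            mul_le_mul_of_nonneg_right hbound hA0
    have hvsplit : v ^ (m + 1 - p) = v ^ m * v ^ (1 - p) := by
      rw [← Real.rpow_add hv]; ring_nf
    have hKeq : K v = v₀ ^ (p - m) * Jv * ((v₀ ^ (1 - p) - v ^ (1 - p)) / (1 - p)) * v ^ m := by
      simp only [hK_def, hc₁, hc₂, hvsplit]
      field_simp
    rw [hKeq]
    exact mul_le_mul_of_nonneg_right hfinal hvm
  -- integrate the pointwise bound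
  have hLHSc : ContinuousOn (fun v : ℝ => (F v - F v₀) ^ 2 * v ^ m) (Set.Icc 0 v₀) :=
    ((hFc.sub continuousOn_const).pow 2).mul (hrpow m hm)
  have hLHSint : IntegrableOn (fun v : ℝ => (F v - F v₀) ^ 2 * v ^ m) (Set.Ioc 0 v₀) :=
    (hLHSc.integrableOn_Icc).mono_set Set.Ioc_subset_Icc_self
  have hKc : ContinuousOn K (Set.Icc 0 v₀) := by
    refine (ContinuousOn.sub ((continuousOn_const).mul (hrpow m hm))
      ((continuousOn_const).mul (hrpow (m + 1 - p) (by linarith)))).mul continuousOn_const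
  have hKint : IntegrableOn K (Set.Ioc 0 v₀) :=
    (hKc.integrableOn_Icc).mono_set Set.Ioc_subset_Icc_self
  have hmono : (∫ v in (0:ℝ)..v₀, (F v - F v₀) ^ 2 * v ^ m) ≤ ∫ v in Set.Ioc 0 v₀, K v := by
    rw [integral_of_le hv₀.le]
    exact setIntegral_mono_on hLHSint hKint measurableSet_Ioc key
  -- compute ∫ K
  have hKval : (∫ v in Set.Ioc 0 v₀, K v)
      = (c₁ * (v₀ ^ (m + 1) / (m + 1)) - c₂ * (v₀ ^ (m + 2 - p) / (m + 2 - p))) * Jv := by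
    rw [← integral_of_le hv₀.le]
    have e1 : (∫ v in (0:ℝ)..v₀, v ^ m) = v₀ ^ (m + 1) / (m + 1) := by
      rw [integral_rpow (Or.inl (by linarith))]
      rw [Real.zero_rpow (by linarith : m + 1 ≠ 0)]
      ring
    have e2 : (∫ v in (0:ℝ)..v₀, v ^ (m + 1 - p)) = v₀ ^ (m + 2 - p) / (m + 2 - p) := by
      rw [integral_rpow (Or.inl (by linarith))]
      have : m + 1 - p + 1 = m + 2 - p := by ring
      rw [this, Real.zero_rpow (by linarith : m + 2 - p ≠ 0)]
      ring
    have hint1 : IntervalIntegrable (fun v : ℝ => v ^ m) volume 0 v₀ := by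
      apply ContinuousOn.intervalIntegrable
      rw [Set.uIcc_of_le hv₀.le]; exact hrpow m hm
    have hint2 : IntervalIntegrable (fun v : ℝ => v ^ (m + 1 - p)) volume 0 v₀ := by
      apply ContinuousOn.intervalIntegrable
      rw [Set.uIcc_of_le hv₀.le]; exact hrpow (m + 1 - p) (by linarith)
    simp only [hK_def]
    rw [intervalIntegral.integral_mul_const,
      intervalIntegral.integral_sub (hint1.const_mul c₁) (hint2.const_mul c₂),
      intervalIntegral.integral_const_mul, intervalIntegral.integral_const_mul, e1, e2]
  -- final arithmetic
  have hm2p0 : m + 2 - p ≠ 0 := by linarith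
  have r2eq : v₀ ^ (2:ℝ) = v₀ ^ 2 := by
    rw [show (2:ℝ) = ((2:ℕ):ℝ) by norm_num, Real.rpow_natCast]
  have t1 : c₁ * (v₀ ^ (m + 1) / (m + 1)) = v₀ ^ 2 / ((1 - p) * (m + 1)) := by
    rw [hc₁, div_mul_div_comm]
    congr 1
    rw [← Real.rpow_add hv₀, ← Real.rpow_add hv₀, ← r2eq]
    ring_nf
  have t2 : c₂ * (v₀ ^ (m + 2 - p) / (m + 2 - p)) = v₀ ^ 2 / ((1 - p) * (m + 2 - p)) := by
    rw [hc₂, div_mul_div_comm]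
    congr 1
    rw [← Real.rpow_add hv₀, ← r2eq]
    ring_nf
  have hscalar : c₁ * (v₀ ^ (m + 1) / (m + 1)) - c₂ * (v₀ ^ (m + 2 - p) / (m + 2 - p))
      = v₀ ^ 2 / ((m + 1) * (m + 2 - p)) := by
    rw [t1, t2]
    field_simp
    ring
  rw [hJ]
  calc (∫ v in (0:ℝ)..v₀, (F v - F v₀) ^ 2 * v ^ m)
      ≤ ∫ v in Set.Ioc 0 v₀, K v := hmono
    _ = (c₁ * (v₀ ^ (m + 1) / (m + 1)) - c₂ * (v₀ ^ (m + 2 - p) / (m + 2 - p))) * Jv := hKval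
    _ ≤ (v₀ ^ 2 / (m + 1)) * Jv := by
        refine mul_le_mul_of_nonneg_right ?_ hJ0
        rw [hscalar]
        refine div_le_div_of_nonneg_left (sq_nonneg v₀) hm1 ?_
        exact le_mul_of_one_le_right hm1.le hm2p
end

section
/- Let δ ∈ (0, 1/2) and let K ⊂ ℝ^k be a compact convex body with B(0, 1−δ) ⊆ K ⊆ B(0, 1+δ). Let r : S^{k−1} → ℝ be its radial function, r(ω) = sup{t ≥ 0 : tω ∈ K}. Then r is Lipschitz on S^{k−1} with Lipschitz constant at most C√δ, where C is a constant depending only on k (one may take C = 10). -/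
private lemma arith_sqrt_lt_one (d x : ℝ) (hx : 0 < x) (hsq : x * x = d) (hd : d < 1) :
    x < 1 := by nlinarith

private lemma arith_big (d x e r₁ r₂ : ℝ) (hx : 0 < x) (hsq : x * x = d)
    (h5 : x / 5 ≤ e) (h₁ : r₁ ≤ 1 + d) (h₂ : 1 - d ≤ r₂) : r₁ - r₂ ≤ 10 * x * e := by
  nlinarith [mul_le_mul_of_nonneg_left h5 (by positivity : (0:ℝ) ≤ 10 * x)]

private lemma arith_c_le_one (e c : ℝ) (hc : e ^ 2 = 2 - 2 * c) : c ≤ 1 := by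
  nlinarith [sq_nonneg e]

private lemma arith_c_pos (e c : ℝ) (hc : e ^ 2 = 2 - 2 * c) (he0 : 0 ≤ e)
    (helt : e < 1 / 5) : 0 < c := by nlinarith

private lemma arith_s_pos (s e c : ℝ) (hs0 : 0 ≤ s) (hw2 : s ^ 2 = 1 - c ^ 2)
    (hc : e ^ 2 = 2 - 2 * c) (hepos : 0 < e) (hcpos : 0 < c) : 0 < s := by
  rcases hs0.eq_or_lt with h | h
  · exfalso; nlinarith [sq_nonneg e, mul_pos hepos hepos]
  · exact h

private lemma arith_s_le_e (s e c : ℝ) (hs0 : 0 ≤ s) (he0 : 0 ≤ e)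
    (hw2 : s ^ 2 = 1 - c ^ 2) (hc : e ^ 2 = 2 - 2 * c) : s ≤ e := by
  have h2e : s ^ 2 ≤ e ^ 2 := by nlinarith [sq_nonneg (1 - c)]
  exact le_of_pow_le_pow_left₀ two_ne_zero he0 h2e

private lemma arith_one_sub_sq_pos (x : ℝ) (h0 : 0 < x) (h1 : x < 1) : 0 < 1 - x ^ 2 := by
  nlinarith

private lemma arith_r1s0 (d r₁ s₀ x : ℝ) (hx : 0 ≤ x) (hsq : x * x = d)
    (hr₁ub : r₁ ≤ 1 + d) (hr₁pos : 0 < r₁) (hd : 0 < d)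
    (hexp : (r₁ * s₀) ^ 2 = r₁ ^ 2 - (1 - d) ^ 2) : r₁ * s₀ ≤ 2 * x := by
  have h4 : (r₁ * s₀) ^ 2 ≤ (2 * x) ^ 2 := by rw [hexp]; nlinarith
  exact le_of_pow_le_pow_left₀ two_ne_zero (by positivity) h4

private lemma arith_te (t d r₁ s e : ℝ) (ht1 : t * (1 - d) = r₁ * s) (hse : s ≤ e)
    (hs0 : 0 ≤ s) (hr₁ub : r₁ ≤ 1 + d) (hr₁pos : 0 < r₁) (hd : 0 < d) (hd' : d < 1 / 2)
    (htpos : 0 < t) : t ≤ 3 * e := by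
  nlinarith [mul_le_mul_of_nonneg_left hse hr₁pos.le]

private lemma arith_term2 (t r₁ s₀ x e : ℝ) (hte : t ≤ 3 * e) (hr1s0 : r₁ * s₀ ≤ 2 * x)
    (htpos : 0 < t) (hrs0 : 0 ≤ r₁ * s₀) (he0 : 0 ≤ e) (hx : 0 ≤ x) :
    t * (r₁ * s₀) ≤ 6 * (x * e) := by
  nlinarith [mul_le_mul hte hr1s0 hrs0 (by positivity : (0:ℝ) ≤ 3 * e)]

private lemma arith_term1 (r₁ e c x d : ℝ) (hc : e ^ 2 = 2 - 2 * c) (hr₁ub : r₁ ≤ 1 + d)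
    (hr₁pos : 0 < r₁) (hd' : d < 1 / 2) (hbig : e < x / 5) (he0 : 0 ≤ e) (hx : 0 < x) :
    r₁ * (1 - c) ≤ x * e := by nlinarith [mul_le_mul_of_nonneg_left hbig.le he0]

private lemma arith_final (r₁ r₂ f e c x t s₀ : ℝ) (hr₂f : f ≤ r₂)
    (hkey : r₁ - f ≤ r₁ * (1 - c) + t * (r₁ * s₀))
    (hterm1 : r₁ * (1 - c) ≤ x * e) (hterm2 : t * (r₁ * s₀) ≤ 6 * (x * e))
    (hxe : 0 ≤ x * e) : r₁ - r₂ ≤ 10 * x * e := by nlinarith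

set_option maxHeartbeats 1000000 in
theorem radial_aux (k : ℕ) (δ : ℝ) (hδ : 0 < δ) (hδ' : δ < 1 / 2)
    (K : Set (EuclideanSpace ℝ (Fin k)))
    (hKc : IsCompact K) (hKconv : Convex ℝ K)
    (hKin : Metric.closedBall (0 : EuclideanSpace ℝ (Fin k)) (1 - δ) ⊆ K)
    (hKout : K ⊆ Metric.closedBall (0 : EuclideanSpace ℝ (Fin k)) (1 + δ))
    (ω₁ ω₂ : EuclideanSpace ℝ (Fin k)) (h1 : ‖ω₁‖ = 1) (h2 : ‖ω₂‖ = 1) :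
    sSup {t : ℝ | 0 ≤ t ∧ t • ω₁ ∈ K} - sSup {t : ℝ | 0 ≤ t ∧ t • ω₂ ∈ K} ≤
      10 * Real.sqrt δ * ‖ω₁ - ω₂‖ := by
  have hδ1 : δ < 1 := by linarith
  have hsq : Real.sqrt δ * Real.sqrt δ = δ := Real.mul_self_sqrt hδ.le
  have hsqpos : 0 < Real.sqrt δ := Real.sqrt_pos.mpr hδ
  have hsqlt1 : Real.sqrt δ < 1 := arith_sqrt_lt_one δ _ hsqpos hsq hδ1
  have hfacts : ∀ ω : EuclideanSpace ℝ (Fin k), ‖ω‖ = 1 →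
      (1 - δ) ∈ {t : ℝ | 0 ≤ t ∧ t • ω ∈ K} ∧
      (∀ t ∈ {t : ℝ | 0 ≤ t ∧ t • ω ∈ K}, t ≤ 1 + δ) ∧
      sSup {t : ℝ | 0 ≤ t ∧ t • ω ∈ K} ∈ {t : ℝ | 0 ≤ t ∧ t • ω ∈ K} := by
    intro ω hω
    have hnorm : ∀ t : ℝ, 0 ≤ t → ‖t • ω‖ = t := by
      intro t ht; rw [norm_smul, hω, mul_one, Real.norm_eq_abs, abs_of_nonneg ht]
    have hmem : (1 - δ) ∈ {t : ℝ | 0 ≤ t ∧ t • ω ∈ K} := by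
      refine ⟨by linarith, hKin ?_⟩
      rw [Metric.mem_closedBall, dist_zero_right, hnorm _ (by linarith)]
    have hub : ∀ t ∈ {t : ℝ | 0 ≤ t ∧ t • ω ∈ K}, t ≤ 1 + δ := by
      intro t ht
      have h := hKout ht.2
      rwa [Metric.mem_closedBall, dist_zero_right, hnorm t ht.1] at h
    refine ⟨hmem, hub, ?_⟩
    have hclosed : IsClosed {t : ℝ | 0 ≤ t ∧ t • ω ∈ K} := by
      have heq : {t : ℝ | 0 ≤ t ∧ t • ω ∈ K} = Set.Ici 0 ∩ (fun t : ℝ => t • ω) ⁻¹' K := rfl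
      rw [heq]
      exact isClosed_Ici.inter (hKc.isClosed.preimage (continuous_id.smul continuous_const))
    have hcomp : IsCompact {t : ℝ | 0 ≤ t ∧ t • ω ∈ K} :=
      (isCompact_Icc (a := (0:ℝ)) (b := 1 + δ)).of_isClosed_subset hclosed
        (fun t ht => ⟨ht.1, hub t ht⟩)
    exact hcomp.sSup_mem ⟨_, hmem⟩
  obtain ⟨hm1, hub1, hsup1⟩ := hfacts ω₁ h1
  obtain ⟨hm2, hub2, hsup2⟩ := hfacts ω₂ h2
  clear hfacts
  set r₁ := sSup {t : ℝ | 0 ≤ t ∧ t • ω₁ ∈ K} with hr₁def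
  set r₂ := sSup {t : ℝ | 0 ≤ t ∧ t • ω₂ ∈ K} with hr₂def
  clear_value r₁ r₂
  have hbdd2 : BddAbove {t : ℝ | 0 ≤ t ∧ t • ω₂ ∈ K} := ⟨1 + δ, hub2⟩
  have hr₁lb : 1 - δ ≤ r₁ := by rw [hr₁def]; exact le_csSup ⟨1 + δ, hub1⟩ hm1
  have hr₂lb : 1 - δ ≤ r₂ := by rw [hr₂def]; exact le_csSup hbdd2 hm2
  have hr₁ub : r₁ ≤ 1 + δ := hub1 _ hsup1
  have hr₂ub : r₂ ≤ 1 + δ := hub2 _ hsup2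
  have hr₁pos : 0 < r₁ := by linarith
  set e := ‖ω₁ - ω₂‖ with hedef
  clear_value e
  have he0 : 0 ≤ e := by rw [hedef]; exact norm_nonneg _
  by_cases hbig : Real.sqrt δ / 5 ≤ e
  · exact arith_big δ _ e r₁ r₂ hsqpos hsq hbig hr₁ub hr₂lb
  push_neg at hbig
  by_cases hr : r₁ ≤ r₂
  · have h10 : (0:ℝ) ≤ 10 * Real.sqrt δ * e := by positivity
    linarith
  push_neg at hr
  have hepos : 0 < e := by
    rcases he0.eq_or_lt with h | h
    · exfalso
      rw [hedef] at h
      have hω : ω₁ = ω₂ := sub_eq_zero.mp (norm_eq_zero.mp h.symm)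
      rw [hω] at hr₁def
      rw [hr₁def, ← hr₂def] at hr
      exact lt_irrefl _ hr
    · exact h
  -- geometry
  set c : ℝ := inner ℝ ω₂ ω₁ with hcdef
  clear_value c
  have hcomm : (inner ℝ ω₁ ω₂ : ℝ) = c := (real_inner_comm ω₂ ω₁).trans hcdef.symm
  have hc : e ^ 2 = 2 - 2 * c := by
    rw [hedef, norm_sub_sq_real, h1, h2, hcomm]; ring
  have hc1 : c ≤ 1 := arith_c_le_one e c hc
  have helt : e < 1 / 5 := by linarith [hbig, hsqlt1]
  have hcpos : 0 < c := arith_c_pos e c hc he0 helt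
  set w := ω₁ - c • ω₂ with hwdef
  clear_value w
  have hω₁eq : ω₁ = c • ω₂ + w := by rw [hwdef]; exact (add_sub_cancel _ _).symm
  have hinner_w : (inner ℝ ω₂ w : ℝ) = 0 := by
    rw [hwdef, inner_sub_right, real_inner_smul_right,
      real_inner_self_eq_norm_mul_norm, h2, ← hcdef]
    ring
  set s := ‖w‖ with hsdef
  clear_value s
  have hs0 : 0 ≤ s := by rw [hsdef]; exact norm_nonneg _
  have hw2 : s ^ 2 = 1 - c ^ 2 := by
    rw [hsdef, hwdef, norm_sub_sq_real, h1, real_inner_smul_right, hcomm, norm_smul,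
      Real.norm_eq_abs, h2, mul_one]
    rw [sq_abs]; ring
  have hspos : 0 < s := arith_s_pos s e c hs0 hw2 hc hepos hcpos
  have hs_le_e : s ≤ e := arith_s_le_e s e c hs0 he0 hw2 hc
  -- tangent direction parameters
  set c₀ : ℝ := (1 - δ) / r₁ with hc₀def
  clear_value c₀
  have hc₀pos : 0 < c₀ := by rw [hc₀def]; exact div_pos (by linarith) hr₁pos
  have hc₀lt : c₀ < 1 := by
    rw [hc₀def, div_lt_one hr₁pos]; linarith
  have hrc₀ : r₁ * c₀ = 1 - δ := by rw [hc₀def]; field_simp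
  set s₀ : ℝ := Real.sqrt (1 - c₀ ^ 2) with hs₀def
  clear_value s₀
  have h1c₀ : 0 < 1 - c₀ ^ 2 := arith_one_sub_sq_pos c₀ hc₀pos hc₀lt
  have hs₀sq : s₀ ^ 2 = 1 - c₀ ^ 2 := by rw [hs₀def]; exact Real.sq_sqrt h1c₀.le
  have hs₀pos : 0 < s₀ := by rw [hs₀def]; exact Real.sqrt_pos.mpr h1c₀
  set t : ℝ := r₁ * s / (1 - δ) with htdef
  clear_value t
  have htpos : 0 < t := by
    rw [htdef]; exact div_pos (mul_pos hr₁pos hspos) (by linarith)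
  have ht1 : t * (1 - δ) = r₁ * s := by
    rw [htdef, div_mul_cancel₀ _ (show (1:ℝ) - δ ≠ 0 by linarith)]
  set D : ℝ := s₀ + t with hDdef
  clear_value D
  have hDpos : 0 < D := by rw [hDdef]; linarith
  -- the auxiliary point on the inner sphere
  set p := ((1 - δ) * c₀) • ω₂ - ((1 - δ) * s₀ / s) • w with hpdef
  clear_value p
  have hpnormsq : ‖p‖ ^ 2 = (1 - δ) ^ 2 := by
    rw [hpdef, norm_sub_sq_real, real_inner_smul_left, real_inner_smul_right, hinner_w,
      norm_smul, norm_smul, Real.norm_eq_abs, Real.norm_eq_abs, h2, ← hsdef]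
    rw [mul_one, mul_pow, sq_abs, sq_abs, div_pow,
      div_mul_cancel₀ _ (pow_ne_zero 2 hspos.ne')]
    linear_combination (1 - δ) ^ 2 * hs₀sq
  have hpK : p ∈ K := by
    apply hKin
    rw [Metric.mem_closedBall, dist_zero_right]
    exact le_of_pow_le_pow_left₀ two_ne_zero (by linarith) (le_of_eq hpnormsq)
  -- the convex combination
  set f : ℝ := (s₀ * (r₁ * c) + t * ((1 - δ) * c₀)) / D with hfdef
  clear_value f
  have hzf : (s₀ / D) • (r₁ • ω₁) + (t / D) • p = f • ω₂ := by
    rw [hω₁eq, hpdef, hfdef, htdef, hDdef]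
    have hne1 : (1:ℝ) - δ ≠ 0 := by linarith
    have hne2 : s₀ + t ≠ 0 := by linarith
    match_scalars
    · field_simp
    · field_simp
      ring
  have hzK : f • ω₂ ∈ K := by
    rw [← hzf]
    refine hKconv hsup1.2 hpK (div_nonneg hs₀pos.le hDpos.le) (div_nonneg htpos.le hDpos.le) ?_
    rw [← add_div, hDdef]
    exact div_self (by linarith)
  have hf0 : 0 ≤ f := by
    rw [hfdef]
    refine div_nonneg ?_ hDpos.le
    have n1 : 0 ≤ s₀ * (r₁ * c) := mul_nonneg hs₀pos.le (mul_nonneg hr₁pos.le hcpos.le)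
    have n2 : 0 ≤ t * ((1 - δ) * c₀) :=
      mul_nonneg htpos.le (mul_nonneg (by linarith) hc₀pos.le)
    linarith
  have hr₂f : f ≤ r₂ := by
    rw [hr₂def]; exact le_csSup hbdd2 ⟨hf0, hzK⟩
  -- estimate r₁ - f
  have hid : r₁ - (1 - δ) * c₀ = r₁ * s₀ ^ 2 := by
    rw [hs₀sq]
    linear_combination c₀ * hrc₀
  have hfval : r₁ - f = (s₀ * (r₁ * (1 - c)) + t * (r₁ * s₀ ^ 2)) / D := by
    rw [hfdef, hDdef, ← hid]
    have hne2 : s₀ + t ≠ 0 := by linarith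
    field_simp
    ring
  have hkey : r₁ - f ≤ r₁ * (1 - c) + t * (r₁ * s₀) := by
    rw [hfval]
    have hnum : (0:ℝ) ≤ s₀ * (r₁ * (1 - c)) + t * (r₁ * s₀ ^ 2) := by
      have n1 : 0 ≤ s₀ * (r₁ * (1 - c)) :=
        mul_nonneg hs₀pos.le (mul_nonneg hr₁pos.le (by linarith))
      have n2 : 0 ≤ t * (r₁ * s₀ ^ 2) :=
        mul_nonneg htpos.le (mul_nonneg hr₁pos.le (sq_nonneg _))
      linarith
    have hstep : (s₀ * (r₁ * (1 - c)) + t * (r₁ * s₀ ^ 2)) / D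
        ≤ (s₀ * (r₁ * (1 - c)) + t * (r₁ * s₀ ^ 2)) / s₀ := by
      apply div_le_div_of_nonneg_left hnum hs₀pos
      rw [hDdef]; linarith
    have heq2 : (s₀ * (r₁ * (1 - c)) + t * (r₁ * s₀ ^ 2)) / s₀
        = r₁ * (1 - c) + t * (r₁ * s₀) := by
      field_simp [hs₀pos.ne']
    linarith [hstep, heq2.le, heq2.ge]
  have hexp : (r₁ * s₀) ^ 2 = r₁ ^ 2 - (1 - δ) ^ 2 := by
    rw [mul_pow, hs₀sq]
    linear_combination (-(r₁ * c₀) - (1 - δ)) * hrc₀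
  have hr₁s₀ : r₁ * s₀ ≤ 2 * Real.sqrt δ :=
    arith_r1s0 δ r₁ s₀ _ hsqpos.le hsq hr₁ub hr₁pos hδ hexp
  have hte : t ≤ 3 * e := arith_te t δ r₁ s e ht1 hs_le_e hs0 hr₁ub hr₁pos hδ hδ' htpos
  have hterm2 : t * (r₁ * s₀) ≤ 6 * (Real.sqrt δ * e) :=
    arith_term2 t r₁ s₀ _ e hte hr₁s₀ htpos (mul_nonneg hr₁pos.le hs₀pos.le) he0 hsqpos.le
  have hterm1 : r₁ * (1 - c) ≤ Real.sqrt δ * e :=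
    arith_term1 r₁ e c _ δ hc hr₁ub hr₁pos hδ' hbig he0 hsqpos
  exact arith_final r₁ r₂ f e c _ t s₀ hr₂f hkey hterm1 hterm2
    (mul_nonneg hsqpos.le he0)

/-- The radial function of a compact convex body squeezed between `B(0, 1−δ)` and
`B(0, 1+δ)` is Lipschitz on the unit sphere with constant `10 √δ`. -/
theorem stmt_17 (k : ℕ) (δ : ℝ) (hδ : 0 < δ) (hδ' : δ < 1 / 2)
    (K : Set (EuclideanSpace ℝ (Fin k)))
    (hKc : IsCompact K) (hKconv : Convex ℝ K)
    (hKin : Metric.closedBall (0 : EuclideanSpace ℝ (Fin k)) (1 - δ) ⊆ K)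
    (hKout : K ⊆ Metric.closedBall (0 : EuclideanSpace ℝ (Fin k)) (1 + δ)) :
    ∀ ω₁ ω₂ : EuclideanSpace ℝ (Fin k), ‖ω₁‖ = 1 → ‖ω₂‖ = 1 →
      |sSup {t : ℝ | 0 ≤ t ∧ t • ω₁ ∈ K} - sSup {t : ℝ | 0 ≤ t ∧ t • ω₂ ∈ K}| ≤
        10 * Real.sqrt δ * ‖ω₁ - ω₂‖ := by
  intro ω₁ ω₂ h1 h2
  rw [abs_sub_le_iff]
  refine ⟨radial_aux k δ hδ hδ' K hKc hKconv hKin hKout ω₁ ω₂ h1 h2, ?_⟩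
  have h := radial_aux k δ hδ hδ' K hKc hKconv hKin hKout ω₂ ω₁ h2 h1
  rwa [norm_sub_rev] at h
end
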